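/- arXiv:2212.00947 — 9 statements merged into one kernel-verified Lean document; each statement's English description precedes it below -/
import Mathlib

section
/- Let K₁ > 0 be a constant satisfying Khintchine's inequality: for every n ∈ ℕ and all scalars a_1,...,a_n, 2^{-n} Σ_{δ ∈ {±1}^n} |Σ_{j=1}^n δ_j a_j| ≥ K₁ (Σ_{j=1}^n |a_j|²)^{1/2}. Let (x_j)_{j=1}^N and (f_j)_{j=1}^N be tight frames for an M-dimensional complex Hilbert space with ‖x_j‖ = ‖f_j‖ for all 1 ≤ j ≤ N, and let C > 0 be the least constant such that ‖Σ_{j=1}^N ε_j ⟨x, f_j⟩ x_j‖ ≤ C‖x‖ for all x in the space and all scalars ε_j with |ε_j| = 1. Then (x_j)_{j=1}^N and (f_j)_{j=1}^N have the same tight frame bound B = M^{-1} Σ_{j=1}^N ‖x_j‖², and C ≤ B ≤ (27/4) K₁^{-4} C. -/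
/-!
Summing the tight frame identity over an orthonormal basis shows that a tight frame bound is
`M⁻¹ ∑ ‖yⱼ‖²`, so `‖xⱼ‖ = ‖fⱼ‖` forces both frames to have the same bound `B`. Cauchy–Schwarz
bounds every multiplier by `B`, whence `C ≤ B`. Conversely, choosing the phases `εⱼ` gives
`∑ⱼ |⟪v, fⱼ⟫| |⟪w, xⱼ⟫| ≤ C ‖v‖ ‖w‖` for all `v, w`. Since `v` and `w` vary independently, we may
average each over the `2^M` sign vectors `∑ᵢ ±eᵢ` separately, and Khintchine's inequality bounds
the two averages below by `K₁ ‖fⱼ‖` and `K₁ ‖xⱼ‖`. This gives `K₁² M B ≤ C M`, i.e. `B ≤ K₁⁻² C`,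
which is at most `(27/4) K₁⁻⁴ C` because Khintchine's inequality for `n = 1` forces `K₁ ≤ 1`.
-/

open scoped ComplexInnerProductSpace InnerProductSpace
open Finset Module

section UnconditionalBound

variable {𝕜 E ι : Type*} [RCLike 𝕜] [NormedAddCommGroup E] [InnerProductSpace 𝕜 E] [Fintype ι]

lemma RCLike.exists_norm_eq_one_and_mul_eq_norm (z : 𝕜) : ∃ u : 𝕜, ‖u‖ = 1 ∧ u * z = ‖z‖ := by
  rcases eq_or_ne z 0 with rfl | hz
  · exact ⟨1, by simp, by simp⟩
  · have hz' : (‖z‖ : 𝕜) ≠ 0 := by simpa using hz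
    refine ⟨starRingEnd 𝕜 z / ‖z‖, ?_, ?_⟩
    · rw [norm_div, RCLike.norm_conj, RCLike.norm_ofReal, abs_norm, div_self (norm_ne_zero_iff.2 hz)]
    · rw [div_mul_eq_mul_div, RCLike.conj_mul, sq, mul_div_cancel_right₀ _ hz']

lemma tight_frame_bound_mul_finrank [FiniteDimensional 𝕜 E] {y : ι → E} {A : ℝ}
    (hA : ∀ v, ∑ j, ‖⟪v, y j⟫_𝕜‖ ^ 2 = A * ‖v‖ ^ 2) : A * finrank 𝕜 E = ∑ j, ‖y j‖ ^ 2 := by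
  let b := stdOrthonormalBasis 𝕜 E
  calc A * finrank 𝕜 E = ∑ i, A * ‖b i‖ ^ 2 := by simp [b.orthonormal.1, mul_comm]
    _ = ∑ i, ∑ j, ‖⟪b i, y j⟫_𝕜‖ ^ 2 := by simp only [hA]
    _ = ∑ j, ‖y j‖ ^ 2 := by rw [sum_comm]; simp only [b.sum_sq_norm_inner_right]

variable (𝕜) in
def IsUnconditionalBound (x f : ι → E) (c : ℝ) : Prop :=
  ∀ (v : E) (ε : ι → 𝕜), (∀ j, ‖ε j‖ = 1) → ‖∑ j, (ε j * ⟪v, f j⟫_𝕜) • x j‖ ≤ c * ‖v‖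

variable {x f : ι → E}

lemma norm_inner_sum_smul_le {ε : ι → 𝕜} (hε : ∀ j, ‖ε j‖ = 1) (v w : E) :
    ‖⟪w, ∑ j, (ε j * ⟪v, f j⟫_𝕜) • x j⟫_𝕜‖ ≤ ∑ j, ‖⟪v, f j⟫_𝕜‖ * ‖⟪w, x j⟫_𝕜‖ := by
  rw [inner_sum]
  refine (norm_sum_le _ _).trans_eq (sum_congr rfl fun j _ => ?_)
  rw [inner_smul_right, norm_mul, norm_mul, hε, one_mul]

lemma exists_inner_sum_smul_eq (x f : ι → E) (v w : E) :
    ∃ ε : ι → 𝕜, (∀ j, ‖ε j‖ = 1) ∧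
      ⟪w, ∑ j, (ε j * ⟪v, f j⟫_𝕜) • x j⟫_𝕜 = ((∑ j, ‖⟪v, f j⟫_𝕜‖ * ‖⟪w, x j⟫_𝕜‖ : ℝ) : 𝕜) := by
  choose ε hε using fun j => RCLike.exists_norm_eq_one_and_mul_eq_norm (⟪v, f j⟫_𝕜 * ⟪w, x j⟫_𝕜)
  refine ⟨ε, fun j => (hε j).1, ?_⟩
  rw [inner_sum, RCLike.ofReal_sum]
  refine sum_congr rfl fun j _ => ?_
  rw [inner_smul_right, mul_assoc, (hε j).2, norm_mul, RCLike.ofReal_mul]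

lemma IsUnconditionalBound.sum_norm_inner_mul_le {c : ℝ} (hc : IsUnconditionalBound 𝕜 x f c)
    (v w : E) : ∑ j, ‖⟪v, f j⟫_𝕜‖ * ‖⟪w, x j⟫_𝕜‖ ≤ c * ‖v‖ * ‖w‖ := by
  obtain ⟨ε, hε, hsum⟩ := exists_inner_sum_smul_eq (𝕜 := 𝕜) x f v w
  calc ∑ j, ‖⟪v, f j⟫_𝕜‖ * ‖⟪w, x j⟫_𝕜‖ = ‖⟪w, ∑ j, (ε j * ⟪v, f j⟫_𝕜) • x j⟫_𝕜‖ := by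
        rw [hsum, RCLike.norm_ofReal, abs_of_nonneg (by positivity)]
    _ ≤ ‖w‖ * ‖∑ j, (ε j * ⟪v, f j⟫_𝕜) • x j‖ := norm_inner_le_norm _ _
    _ ≤ ‖w‖ * (c * ‖v‖) := by gcongr; exact hc v ε hε
    _ = c * ‖v‖ * ‖w‖ := by ring

lemma sum_norm_inner_mul_le_of_bessel {Bx Bf : ℝ} (hx : ∀ v, ∑ j, ‖⟪v, x j⟫_𝕜‖ ^ 2 ≤ Bx * ‖v‖ ^ 2)
    (hf : ∀ v, ∑ j, ‖⟪v, f j⟫_𝕜‖ ^ 2 ≤ Bf * ‖v‖ ^ 2) (v w : E) :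
    ∑ j, ‖⟪v, f j⟫_𝕜‖ * ‖⟪w, x j⟫_𝕜‖ ≤ √Bx * √Bf * ‖v‖ * ‖w‖ := by
  calc ∑ j, ‖⟪v, f j⟫_𝕜‖ * ‖⟪w, x j⟫_𝕜‖
      ≤ √(∑ j, ‖⟪v, f j⟫_𝕜‖ ^ 2) * √(∑ j, ‖⟪w, x j⟫_𝕜‖ ^ 2) := Real.sum_mul_le_sqrt_mul_sqrt _ _ _
    _ ≤ √(Bf * ‖v‖ ^ 2) * √(Bx * ‖w‖ ^ 2) := by gcongr <;> simp only [hf, hx]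
    _ = √Bx * √Bf * ‖v‖ * ‖w‖ := by
        rw [Real.sqrt_mul' _ (sq_nonneg _), Real.sqrt_mul' _ (sq_nonneg _),
          Real.sqrt_sq (norm_nonneg _), Real.sqrt_sq (norm_nonneg _)]
        ring

lemma isUnconditionalBound_of_bessel {Bx Bf : ℝ} (hx : ∀ v, ∑ j, ‖⟪v, x j⟫_𝕜‖ ^ 2 ≤ Bx * ‖v‖ ^ 2)
    (hf : ∀ v, ∑ j, ‖⟪v, f j⟫_𝕜‖ ^ 2 ≤ Bf * ‖v‖ ^ 2) : IsUnconditionalBound 𝕜 x f (√Bx * √Bf) := by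
  intro v ε hε
  set u := ∑ j, (ε j * ⟪v, f j⟫_𝕜) • x j
  have hu : ‖u‖ ^ 2 ≤ √Bx * √Bf * ‖v‖ * ‖u‖ := by
    have : ‖u‖ ^ 2 = ‖⟪u, u⟫_𝕜‖ := by simp [inner_self_eq_norm_sq_to_K]
    rw [this]
    exact (norm_inner_sum_smul_le hε v u).trans (sum_norm_inner_mul_le_of_bessel hx hf v u)
  have : 0 ≤ √Bx * √Bf * ‖v‖ := by positivity
  nlinarith [norm_nonneg u]

end UnconditionalBound

def IsKhintchineConstant (K : ℝ) : Prop :=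
  ∀ (n : ℕ) (a : Fin n → ℂ), K * Real.sqrt (∑ j, ‖a j‖ ^ 2) ≤
    ((2 : ℝ) ^ n)⁻¹ * ∑ δ : Fin n → Bool, ‖∑ j, (if δ j then (1 : ℂ) else -1) * a j‖

lemma IsKhintchineConstant.le_one {K : ℝ} (hK : IsKhintchineConstant K) : K ≤ 1 := by
  have h := hK 1 ![1]
  rw [← (Equiv.funUnique (Fin 1) Bool).symm.sum_comp] at h
  norm_num at h
  linarith

section SignVector

variable {H : Type*} [NormedAddCommGroup H] [InnerProductSpace ℂ H] {n : ℕ}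

noncomputable def signVector (e : OrthonormalBasis (Fin n) ℂ H) (δ : Fin n → Bool) : H :=
  ∑ i, (if δ i then (1 : ℂ) else -1) • e i

lemma inner_signVector_left (e : OrthonormalBasis (Fin n) ℂ H) (δ : Fin n → Bool) (y : H) :
    ⟪signVector e δ, y⟫ = ∑ i, (if δ i then (1 : ℂ) else -1) * ⟪e i, y⟫ := by
  rw [signVector, sum_inner]
  refine sum_congr rfl fun i _ => ?_
  rw [inner_smul_left]
  split_ifs <;> simp

lemma norm_signVector (e : OrthonormalBasis (Fin n) ℂ H) (δ : Fin n → Bool) :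
    ‖signVector e δ‖ = √n := by
  have h := e.sum_sq_norm_inner_right (signVector e δ)
  simp only [signVector, e.orthonormal.inner_right_fintype] at h
  rw [← Real.sqrt_sq (norm_nonneg (signVector e δ)), signVector, ← h]
  congr 1
  simp [apply_ite]

lemma IsKhintchineConstant.mul_norm_le_sum {K : ℝ} (hK : IsKhintchineConstant K)
    (e : OrthonormalBasis (Fin n) ℂ H) (y : H) :
    K * ‖y‖ ≤ ((2 : ℝ) ^ n)⁻¹ * ∑ δ, ‖⟪signVector e δ, y⟫‖ := by
  simpa only [inner_signVector_left, e.sum_sq_norm_inner_right, Real.sqrt_sq (norm_nonneg y)]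
    using hK n fun i => ⟪e i, y⟫

lemma IsKhintchineConstant.sq_mul_sum_norm_mul_norm_le {K : ℝ} (hK : IsKhintchineConstant K)
    (hK0 : 0 ≤ K) (e : OrthonormalBasis (Fin n) ℂ H) {ι : Type*} [Fintype ι] {x f : ι → H}
    {c : ℝ} (hc : ∀ v w, ∑ j, ‖⟪v, f j⟫‖ * ‖⟪w, x j⟫‖ ≤ c * ‖v‖ * ‖w‖) :
    K ^ 2 * ∑ j, ‖f j‖ * ‖x j‖ ≤ c * n := by
  set p : ℝ := ((2 : ℝ) ^ n)⁻¹
  calc K ^ 2 * ∑ j, ‖f j‖ * ‖x j‖ = ∑ j, (K * ‖f j‖) * (K * ‖x j‖) := by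
        rw [mul_sum]; exact sum_congr rfl fun j _ => by ring
    _ ≤ ∑ j, (p * ∑ δ, ‖⟪signVector e δ, f j⟫‖) * (p * ∑ γ, ‖⟪signVector e γ, x j⟫‖) := by
        refine sum_le_sum fun j _ => mul_le_mul (hK.mul_norm_le_sum e (f j))
          (hK.mul_norm_le_sum e (x j)) (by positivity) (by positivity)
    _ = p * p * ∑ δ, ∑ γ, ∑ j, ‖⟪signVector e δ, f j⟫‖ * ‖⟪signVector e γ, x j⟫‖ := by
        simp_rw [mul_mul_mul_comm p, sum_mul_sum]
        rw [← mul_sum, sum_comm]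
        exact congrArg _ (sum_congr rfl fun _ _ => sum_comm)
    _ ≤ p * p * ∑ δ, ∑ γ, c * ‖signVector e δ‖ * ‖signVector e γ‖ := by
        gcongr with δ _ γ
        exact hc _ _
    _ = c * n := by
        simp only [norm_signVector, mul_assoc c, Real.mul_self_sqrt (Nat.cast_nonneg n), sum_const,
          card_univ, Fintype.card_pi, Fintype.card_bool, prod_const, Fintype.card_fin, nsmul_eq_mul,
          Nat.cast_pow, Nat.cast_ofNat, p]
        field_simp

end SignVector

theorem tight_frame_pair_bound_general
    {H : Type*} [NormedAddCommGroup H] [InnerProductSpace ℂ H] [FiniteDimensional ℂ H]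
    (K₁ : ℝ) (hK₁ : 0 < K₁)
    (hK : ∀ (n : ℕ) (a : Fin n → ℂ),
      K₁ * Real.sqrt (∑ j, ‖a j‖ ^ 2) ≤
        ((2 : ℝ) ^ n)⁻¹ * ∑ δ : Fin n → Bool, ‖∑ j, (if δ j then (1 : ℂ) else -1) * a j‖)
    (N M : ℕ) (hdim : Module.finrank ℂ H = M)
    (x f : Fin N → H)
    (hxtight : ∃ A : ℝ, 0 < A ∧ ∀ v : H, ∑ j, ‖⟪v, x j⟫‖ ^ 2 = A * ‖v‖ ^ 2)
    (hftight : ∃ A : ℝ, 0 < A ∧ ∀ v : H, ∑ j, ‖⟪v, f j⟫‖ ^ 2 = A * ‖v‖ ^ 2)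
    (hnorm : ∀ j, ‖x j‖ = ‖f j‖)
    (C : ℝ)
    (hC : IsLeast {c : ℝ | ∀ (v : H) (ε : Fin N → ℂ), (∀ j, ‖ε j‖ = 1) →
      ‖∑ j, (ε j * ⟪v, f j⟫) • x j‖ ≤ c * ‖v‖} C) :
    (∀ v : H, ∑ j, ‖⟪v, x j⟫‖ ^ 2 = ((M : ℝ)⁻¹ * ∑ j, ‖x j‖ ^ 2) * ‖v‖ ^ 2) ∧
    (∀ v : H, ∑ j, ‖⟪v, f j⟫‖ ^ 2 = ((M : ℝ)⁻¹ * ∑ j, ‖x j‖ ^ 2) * ‖v‖ ^ 2) ∧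
    C ≤ (M : ℝ)⁻¹ * ∑ j, ‖x j‖ ^ 2 ∧
    (M : ℝ)⁻¹ * ∑ j, ‖x j‖ ^ 2 ≤ 27 / 4 * (K₁ ^ 4)⁻¹ * C := by
  obtain ⟨A, hA, hx⟩ := hxtight
  obtain ⟨A', -, hf⟩ := hftight
  subst hdim
  -- on the zero space every real is a multiplier bound, so none is least
  have hM : (0 : ℝ) < finrank ℂ H := Nat.cast_pos.2 <| Nat.pos_of_ne_zero fun h0 => by
    have : Subsingleton H := Module.finrank_zero_iff.mp h0
    linarith [hC.2 (show C - 1 ∈ _ from fun v ε _ => by simp [Subsingleton.elim v 0])]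
  set B := (finrank ℂ H : ℝ)⁻¹ * ∑ j, ‖x j‖ ^ 2
  obtain rfl : A = B := by simp only [B, ← tight_frame_bound_mul_finrank hx]; field_simp
  obtain rfl : A' = B := by simp only [B, hnorm, ← tight_frame_bound_mul_finrank hf]; field_simp
  refine ⟨hx, hf, ?_, ?_⟩
  · simpa only [Real.mul_self_sqrt hA.le] using
      hC.2 (isUnconditionalBound_of_bessel (fun v => (hx v).le) (fun v => (hf v).le))
  have hKB : K₁ ^ 2 * B ≤ C := by
    have hsum : ∑ j, ‖f j‖ * ‖x j‖ = finrank ℂ H * B := by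
      simp only [B, ← hnorm, ← sq]; field_simp
    have h := IsKhintchineConstant.sq_mul_sum_norm_mul_norm_le hK hK₁.le
      (stdOrthonormalBasis ℂ H) (IsUnconditionalBound.sum_norm_inner_mul_le hC.1)
    rw [hsum] at h
    exact le_of_mul_le_mul_right (by linarith) hM
  have hK1 : K₁ ^ 2 ≤ 1 := pow_le_one₀ hK₁.le (IsKhintchineConstant.le_one hK)
  have hC0 : 0 ≤ C := (by positivity : 0 ≤ K₁ ^ 2 * B).trans hKB
  rw [show 27 / 4 * (K₁ ^ 4)⁻¹ * C = 27 / 4 * C / K₁ ^ 4 by ring, le_div_iff₀ (by positivity)]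
  nlinarith [mul_le_mul_of_nonneg_left hKB (sq_nonneg K₁), mul_le_mul_of_nonneg_right hK1 hC0]

/-- Corollary: if `(xⱼ)` and `(fⱼ)` are tight frames for an `M`-dimensional complex Hilbert
space with `‖xⱼ‖ = ‖fⱼ‖` for all `j`, and `C > 0` is the least constant for the
unconditional multiplier bound, then both tight frames have the same frame bound
`B = M⁻¹ ∑ ‖xⱼ‖²` and `C ≤ B ≤ (27/4) K₁⁻⁴ C`, where `K₁ > 0` is any constant satisfying
Khintchine's inequality. -/
theorem tight_frame_pair_bound
    {H : Type*} [NormedAddCommGroup H] [InnerProductSpace ℂ H] [FiniteDimensional ℂ H]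
    (K₁ : ℝ) (hK₁ : 0 < K₁)
    (hK : ∀ (n : ℕ) (a : Fin n → ℂ),
      K₁ * Real.sqrt (∑ j, ‖a j‖ ^ 2) ≤
        ((2 : ℝ) ^ n)⁻¹ * ∑ δ : Fin n → Bool, ‖∑ j, (if δ j then (1 : ℂ) else -1) * a j‖)
    (N M : ℕ) (hdim : Module.finrank ℂ H = M)
    (x f : Fin N → H)
    (hxtight : ∃ A : ℝ, 0 < A ∧ ∀ v : H, ∑ j, ‖⟪v, x j⟫‖ ^ 2 = A * ‖v‖ ^ 2)
    (hftight : ∃ A : ℝ, 0 < A ∧ ∀ v : H, ∑ j, ‖⟪v, f j⟫‖ ^ 2 = A * ‖v‖ ^ 2)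
    (hnorm : ∀ j, ‖x j‖ = ‖f j‖)
    (C : ℝ) (hCpos : 0 < C)
    (hC : IsLeast {c : ℝ | ∀ (v : H) (ε : Fin N → ℂ), (∀ j, ‖ε j‖ = 1) →
      ‖∑ j, (ε j * ⟪v, f j⟫) • x j‖ ≤ c * ‖v‖} C) :
    (∀ v : H, ∑ j, ‖⟪v, x j⟫‖ ^ 2 = ((M : ℝ)⁻¹ * ∑ j, ‖x j‖ ^ 2) * ‖v‖ ^ 2) ∧
    (∀ v : H, ∑ j, ‖⟪v, f j⟫‖ ^ 2 = ((M : ℝ)⁻¹ * ∑ j, ‖x j‖ ^ 2) * ‖v‖ ^ 2) ∧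
    C ≤ (M : ℝ)⁻¹ * ∑ j, ‖x j‖ ^ 2 ∧
    (M : ℝ)⁻¹ * ∑ j, ‖x j‖ ^ 2 ≤ 27 / 4 * (K₁ ^ 4)⁻¹ * C :=
  tight_frame_pair_bound_general K₁ hK₁ hK N M hdim x f hxtight hftight hnorm C hC
end

section
/- Let b, C > 0 and N ∈ ℕ. Let (x_j)_{j=1}^N and (f_j)_{j=1}^N be sequences in a complex Hilbert space H such that ‖x_j‖·‖f_j‖ ≥ b for all 1 ≤ j ≤ N, and such that ‖Σ_{j=1}^N ε_j ⟨x, f_j⟩ x_j‖ ≤ C‖x‖ for all x ∈ H and all scalars ε_1,...,ε_N with |ε_j| = 1. Set d_j = ‖x_j‖^{-1/2} ‖f_j‖^{1/2} for 1 ≤ j ≤ N. Then both (d_j x_j)_{j=1}^N and (d_j^{-1} f_j)_{j=1}^N are Bessel with Bessel bound b^{-1} C². -/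
open scoped ComplexInnerProductSpace

/-!
Testing the unconditional bound against a suitable choice of signs gives a Bessel-type
inequality: by the parallelogram law one of `a ± w` has squared norm at least
`‖a‖² + ‖w‖²`, so signs can be chosen greedily with `∑ ‖wⱼ‖² ≤ ‖∑ εⱼ wⱼ‖²`. Applied to
`wⱼ = ⟪v, fⱼ⟫ xⱼ` this gives `∑ |⟪v, fⱼ⟫|² ‖xⱼ‖² ≤ C² ‖v‖²`, and since the multiplier
operators have adjoints of the same form, also `∑ |⟪v, xⱼ⟫|² ‖fⱼ‖² ≤ C² ‖v‖²`. The weights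
`dⱼ² = ‖fⱼ‖ / ‖xⱼ‖ ≤ ‖fⱼ‖² / b` and `dⱼ⁻² ≤ ‖xⱼ‖² / b` then convert these into the two
Bessel bounds.
-/

open scoped InnerProductSpace
open Finset

lemma div_le_inv_mul_sq {b p q : ℝ} (hb : 0 < b) (h : b ≤ p * q) : q / p ≤ b⁻¹ * q ^ 2 := by
  have hpq : p * q ≠ 0 := (hb.trans_le h).ne'
  calc q / p = q ^ 2 / (p * q) := by
        field_simp [left_ne_zero_of_mul hpq, right_ne_zero_of_mul hpq]
    _ ≤ q ^ 2 / b := div_le_div_of_nonneg_left (sq_nonneg q) hb h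
    _ = b⁻¹ * q ^ 2 := div_eq_inv_mul _ _

lemma rpow_neg_half_mul_rpow_half_sq {p q : ℝ} (hp : 0 ≤ p) (hq : 0 ≤ q) :
    (p ^ (-(1 / 2) : ℝ) * q ^ ((1 / 2) : ℝ)) ^ 2 = q / p := by
  rw [Real.rpow_neg hp, ← Real.sqrt_eq_rpow, ← Real.sqrt_eq_rpow, mul_pow, inv_pow,
    Real.sq_sqrt hp, Real.sq_sqrt hq, inv_mul_eq_div]

section

variable {𝕜 E ι : Type*} [RCLike 𝕜] [NormedAddCommGroup E] [InnerProductSpace 𝕜 E]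

lemma exists_norm_eq_one_sq_norm_add_le (a w : E) :
    ∃ σ : 𝕜, ‖σ‖ = 1 ∧ ‖a‖ ^ 2 + ‖w‖ ^ 2 ≤ ‖a + σ • w‖ ^ 2 := by
  have h := parallelogram_law_with_norm 𝕜 a w
  by_cases hle : ‖a - w‖ ^ 2 ≤ ‖a + w‖ ^ 2
  · exact ⟨1, norm_one, by rw [one_smul]; linarith⟩
  · exact ⟨-1, by simp, by rw [neg_one_smul, ← sub_eq_add_neg]; linarith⟩

lemma exists_unimodular_sum_sq_norm_le_sq_norm_sum (s : Finset ι) (w : ι → E) :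
    ∃ ε : ι → 𝕜, (∀ j, ‖ε j‖ = 1) ∧ ∑ j ∈ s, ‖w j‖ ^ 2 ≤ ‖∑ j ∈ s, ε j • w j‖ ^ 2 := by
  classical
  induction s using Finset.induction_on with
  | empty => exact ⟨fun _ => 1, fun _ => norm_one, by simp⟩
  | insert k s hk ih =>
    obtain ⟨ε, hε, hs⟩ := ih
    obtain ⟨σ, hσ, hσk⟩ := exists_norm_eq_one_sq_norm_add_le (𝕜 := 𝕜) (∑ j ∈ s, ε j • w j) (w k)
    refine ⟨Function.update ε k σ, fun j => ?_, ?_⟩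
    · by_cases hj : j = k
      · subst hj; simpa using hσ
      · simpa [Function.update_of_ne hj] using hε j
    · have hsum : ∑ j ∈ s, Function.update ε k σ j • w j = ∑ j ∈ s, ε j • w j :=
        sum_congr rfl fun j hj => by rw [Function.update_of_ne (ne_of_mem_of_not_mem hj hk)]
      rw [sum_insert hk, sum_insert hk, Function.update_self, hsum, add_comm (σ • w k)]
      linarith

lemma norm_le_of_forall_norm_inner_le {u : E} {M : ℝ} (hM : 0 ≤ M)
    (h : ∀ y, ‖⟪y, u⟫_𝕜‖ ≤ M * ‖y‖) : ‖u‖ ≤ M := by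
  have hu : ‖u‖ ^ 2 ≤ M * ‖u‖ := by
    simpa [inner_self_eq_norm_sq_to_K (𝕜 := 𝕜), norm_pow] using h u
  nlinarith [norm_nonneg u]

variable [Fintype ι]

lemma sum_sq_norm_le_sq_of_forall_unimodular {w : ι → E} {M : ℝ}
    (h : ∀ ε : ι → 𝕜, (∀ j, ‖ε j‖ = 1) → ‖∑ j, ε j • w j‖ ≤ M) :
    ∑ j, ‖w j‖ ^ 2 ≤ M ^ 2 := by
  obtain ⟨ε, hε, hle⟩ := exists_unimodular_sum_sq_norm_le_sq_norm_sum (𝕜 := 𝕜) univ w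
  exact hle.trans (pow_le_pow_left₀ (norm_nonneg _) (h ε hε) 2)

lemma sum_sq_norm_inner_mul_sq_norm_le {x f : ι → E} {C : ℝ}
    (h : ∀ (v : E) (ε : ι → 𝕜), (∀ j, ‖ε j‖ = 1) →
      ‖∑ j, (ε j * ⟪v, f j⟫_𝕜) • x j‖ ≤ C * ‖v‖) (v : E) :
    ∑ j, ‖⟪v, f j⟫_𝕜‖ ^ 2 * ‖x j‖ ^ 2 ≤ C ^ 2 * ‖v‖ ^ 2 := by
  have hw := sum_sq_norm_le_sq_of_forall_unimodular (w := fun j => ⟪v, f j⟫_𝕜 • x j)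
    (M := C * ‖v‖) fun ε hε => by simpa only [mul_smul] using h v ε hε
  simpa only [norm_smul, mul_pow] using hw

lemma inner_sum_smul_inner_comm (ε : ι → 𝕜) (x f : ι → E) (u v : E) :
    ⟪u, ∑ j, (ε j * ⟪v, x j⟫_𝕜) • f j⟫_𝕜 = ⟪v, ∑ j, (ε j * ⟪u, f j⟫_𝕜) • x j⟫_𝕜 := by
  simp only [inner_sum, inner_smul_right]
  exact sum_congr rfl fun j _ => by ring

lemma norm_sum_smul_inner_swap_le {x f : ι → E} {C : ℝ}
    (h : ∀ (v : E) (ε : ι → 𝕜), (∀ j, ‖ε j‖ = 1) →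
      ‖∑ j, (ε j * ⟪v, f j⟫_𝕜) • x j‖ ≤ C * ‖v‖)
    (v : E) (ε : ι → 𝕜) (hε : ∀ j, ‖ε j‖ = 1) :
    ‖∑ j, (ε j * ⟪v, x j⟫_𝕜) • f j‖ ≤ C * ‖v‖ := by
  refine norm_le_of_forall_norm_inner_le (𝕜 := 𝕜) ((norm_nonneg _).trans (h v ε hε)) fun y => ?_
  calc ‖⟪y, ∑ j, (ε j * ⟪v, x j⟫_𝕜) • f j⟫_𝕜‖
      = ‖⟪v, ∑ j, (ε j * ⟪y, f j⟫_𝕜) • x j⟫_𝕜‖ := by rw [inner_sum_smul_inner_comm]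
    _ ≤ ‖v‖ * (C * ‖y‖) := (norm_inner_le_norm _ _).trans (by gcongr; exact h y ε hε)
    _ = C * ‖v‖ * ‖y‖ := by ring

lemma sum_sq_norm_inner_smul_le {b M : ℝ} (hb : 0 < b) {c : ι → 𝕜} {g h : ι → E}
    (hgh : ∀ j, b ≤ ‖g j‖ * ‖h j‖) (hc : ∀ j, ‖c j‖ ^ 2 = ‖h j‖ / ‖g j‖) {v : E}
    (hv : ∑ j, ‖⟪v, g j⟫_𝕜‖ ^ 2 * ‖h j‖ ^ 2 ≤ M) :
    ∑ j, ‖⟪v, c j • g j⟫_𝕜‖ ^ 2 ≤ b⁻¹ * M := by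
  calc ∑ j, ‖⟪v, c j • g j⟫_𝕜‖ ^ 2 = ∑ j, ‖h j‖ / ‖g j‖ * ‖⟪v, g j⟫_𝕜‖ ^ 2 := by
        simp only [inner_smul_right, norm_mul, mul_pow, hc]
    _ ≤ ∑ j, b⁻¹ * ‖h j‖ ^ 2 * ‖⟪v, g j⟫_𝕜‖ ^ 2 := by
        gcongr with j; exact div_le_inv_mul_sq hb (hgh j)
    _ = b⁻¹ * ∑ j, ‖⟪v, g j⟫_𝕜‖ ^ 2 * ‖h j‖ ^ 2 := by
        rw [mul_sum]; exact sum_congr rfl fun j _ => by ring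
    _ ≤ b⁻¹ * M := by gcongr

end

theorem bessel_bound_parallelogram_general
    {H : Type*} [NormedAddCommGroup H] [InnerProductSpace ℂ H]
    (b C : ℝ) (hb : 0 < b) (N : ℕ) (x f : Fin N → H)
    (hnorm : ∀ j, b ≤ ‖x j‖ * ‖f j‖)
    (hunc : ∀ (v : H) (ε : Fin N → ℂ), (∀ j, ‖ε j‖ = 1) →
      ‖∑ j, (ε j * ⟪v, f j⟫) • x j‖ ≤ C * ‖v‖)
    (d : Fin N → ℝ)
    (hd : ∀ j, d j = ‖x j‖ ^ (-(1 / 2) : ℝ) * ‖f j‖ ^ ((1 / 2) : ℝ)) :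
    (∀ v : H, ∑ j, ‖⟪v, (d j : ℂ) • x j⟫‖ ^ 2 ≤ b⁻¹ * C ^ 2 * ‖v‖ ^ 2) ∧
    (∀ v : H, ∑ j, ‖⟪v, ((d j : ℂ))⁻¹ • f j⟫‖ ^ 2 ≤ b⁻¹ * C ^ 2 * ‖v‖ ^ 2) := by
  have hd_sq (j : Fin N) : ‖(d j : ℂ)‖ ^ 2 = ‖f j‖ / ‖x j‖ := by
    rw [Complex.norm_real, Real.norm_eq_abs, sq_abs, hd j,
      rpow_neg_half_mul_rpow_half_sq (norm_nonneg _) (norm_nonneg _)]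
  refine ⟨fun v => ?_, fun v => ?_⟩
  · rw [mul_assoc]
    exact sum_sq_norm_inner_smul_le hb hnorm hd_sq
      (sum_sq_norm_inner_mul_sq_norm_le (norm_sum_smul_inner_swap_le hunc) v)
  · rw [mul_assoc]
    exact sum_sq_norm_inner_smul_le hb (fun j => (hnorm j).trans_eq (mul_comm _ _))
      (fun j => by rw [norm_inv, inv_pow, hd_sq, inv_div])
      (sum_sq_norm_inner_mul_sq_norm_le hunc v)

/-- If `‖xⱼ‖·‖fⱼ‖ ≥ b` for all `j` and the unconditional multiplier bound `C` holds,
then with `dⱼ = ‖xⱼ‖^(-1/2) ‖fⱼ‖^(1/2)`, both `(dⱼ xⱼ)` and `(dⱼ⁻¹ fⱼ)` are Bessel with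
Bessel bound `b⁻¹ C²`. -/
theorem bessel_bound_parallelogram
    {H : Type*} [NormedAddCommGroup H] [InnerProductSpace ℂ H]
    (b C : ℝ) (hb : 0 < b) (hC : 0 < C) (N : ℕ) (x f : Fin N → H)
    (hnorm : ∀ j, b ≤ ‖x j‖ * ‖f j‖)
    (hunc : ∀ (v : H) (ε : Fin N → ℂ), (∀ j, ‖ε j‖ = 1) →
      ‖∑ j, (ε j * ⟪v, f j⟫) • x j‖ ≤ C * ‖v‖)
    (d : Fin N → ℝ)
    (hd : ∀ j, d j = ‖x j‖ ^ (-(1 / 2) : ℝ) * ‖f j‖ ^ ((1 / 2) : ℝ)) :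
    (∀ v : H, ∑ j, ‖⟪v, (d j : ℂ) • x j⟫‖ ^ 2 ≤ b⁻¹ * C ^ 2 * ‖v‖ ^ 2) ∧
    (∀ v : H, ∑ j, ‖⟪v, ((d j : ℂ))⁻¹ • f j⟫‖ ^ 2 ≤ b⁻¹ * C ^ 2 * ‖v‖ ^ 2) :=
  bessel_bound_parallelogram_general b C hb N x f hnorm hunc d hd
end

section
/- Let b, C > 0 and let (x_j)_{j=1}^∞ and (f_j)_{j=1}^∞ be sequences in a complex Hilbert space H such that ‖x_j‖·‖f_j‖ ≥ b for all j ∈ ℕ, and such that for every n ∈ ℕ, every x ∈ H, and all scalars ε_1,...,ε_n with |ε_j| = 1 one has ‖Σ_{j=1}^n ε_j ⟨x, f_j⟩ x_j‖ ≤ C‖x‖. Set d_j = ‖x_j‖^{-1/2} ‖f_j‖^{1/2} for j ∈ ℕ. Then both (d_j x_j)_{j=1}^∞ and (d_j^{-1} f_j)_{j=1}^∞ are Bessel with Bessel bound b^{-1} C². -/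
open scoped ComplexInnerProductSpace

/-- Greedy sign choice via parallelogram law. -/
lemma exists_signs_aux {H : Type*} [NormedAddCommGroup H] [InnerProductSpace ℂ H]
    (n : ℕ) (y : ℕ → H) :
    ∃ ε : ℕ → ℂ, (∀ j, ‖ε j‖ = 1) ∧
      ∑ j ∈ Finset.range n, ‖y j‖ ^ 2 ≤ ‖∑ j ∈ Finset.range n, ε j • y j‖ ^ 2 := by
  induction n with
  | zero => exact ⟨fun _ => 1, fun _ => norm_one, by simp⟩
  | succ n ih =>
    obtain ⟨ε, hε, hsum⟩ := ih
    set s := ∑ j ∈ Finset.range n, ε j • y j with hs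
    have hpar := parallelogram_law_with_norm ℂ s (y n)
    have hkey : ‖s‖ ^ 2 + ‖y n‖ ^ 2 ≤ ‖s + y n‖ ^ 2 ∨
        ‖s‖ ^ 2 + ‖y n‖ ^ 2 ≤ ‖s - y n‖ ^ 2 := by
      by_contra h
      push_neg at h
      nlinarith [h.1, h.2]
    rcases hkey with h | h
    · refine ⟨Function.update ε n 1, ?_, ?_⟩
      · intro j
        rcases eq_or_ne j n with rfl | hj
        · simp
        · simp [Function.update_of_ne hj, hε j]
      · rw [Finset.sum_range_succ, Finset.sum_range_succ]
        have heq : ∑ j ∈ Finset.range n, Function.update ε n 1 j • y j = s := by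
          rw [hs]
          refine Finset.sum_congr rfl fun j hj => ?_
          rw [Function.update_of_ne (Finset.mem_range.mp hj).ne]
        rw [heq, Function.update_self, one_smul]
        calc ∑ j ∈ Finset.range n, ‖y j‖ ^ 2 + ‖y n‖ ^ 2
            ≤ ‖s‖ ^ 2 + ‖y n‖ ^ 2 := by linarith
          _ ≤ ‖s + y n‖ ^ 2 := h
    · refine ⟨Function.update ε n (-1), ?_, ?_⟩
      · intro j
        rcases eq_or_ne j n with rfl | hj
        · simp
        · simp [Function.update_of_ne hj, hε j]
      · rw [Finset.sum_range_succ, Finset.sum_range_succ]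
        have heq : ∑ j ∈ Finset.range n, Function.update ε n (-1) j • y j = s := by
          rw [hs]
          refine Finset.sum_congr rfl fun j hj => ?_
          rw [Function.update_of_ne (Finset.mem_range.mp hj).ne]
        rw [heq, Function.update_self, neg_one_smul, ← sub_eq_add_neg]
        calc ∑ j ∈ Finset.range n, ‖y j‖ ^ 2 + ‖y n‖ ^ 2
            ≤ ‖s‖ ^ 2 + ‖y n‖ ^ 2 := by linarith
          _ ≤ ‖s - y n‖ ^ 2 := h

/-- The "adjoint" bound. -/
lemma adjoint_bound {H : Type*} [NormedAddCommGroup H] [InnerProductSpace ℂ H]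
    (C : ℝ) (hC : 0 < C) (x f : ℕ → H)
    (hunc : ∀ (n : ℕ) (v : H) (ε : ℕ → ℂ), (∀ j, ‖ε j‖ = 1) →
      ‖∑ j ∈ Finset.range n, (ε j * ⟪v, f j⟫) • x j‖ ≤ C * ‖v‖)
    (n : ℕ) (w : H) (ε : ℕ → ℂ) (hε : ∀ j, ‖ε j‖ = 1) :
    ‖∑ j ∈ Finset.range n, (ε j * ⟪w, x j⟫) • f j‖ ≤ C * ‖w‖ := by
  set u := ∑ j ∈ Finset.range n, (ε j * ⟪w, x j⟫) • f j with hu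
  have hz := hunc n u ε hε
  have hid : (⟪u, u⟫ : ℂ) = ⟪w, ∑ j ∈ Finset.range n, (ε j * ⟪u, f j⟫) • x j⟫ := by
    conv_lhs => rw [hu]
    rw [inner_sum, inner_sum]
    refine Finset.sum_congr rfl fun j hj => ?_
    rw [inner_smul_right, inner_smul_right, ← hu]
    ring
  have h1 : ‖u‖ ^ 2 = ‖(⟪u, u⟫ : ℂ)‖ := by
    rw [inner_self_eq_norm_sq_to_K]
    simp
  have h2 : ‖u‖ ^ 2 ≤ ‖w‖ * (C * ‖u‖) := by
    rw [h1, hid]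
    exact le_trans (norm_inner_le_norm _ _) (by gcongr)
  rcases (norm_nonneg u).eq_or_lt with h0 | h0
  · rw [← h0]; positivity
  · rw [show ‖w‖ * (C * ‖u‖) = (C * ‖w‖) * ‖u‖ by ring, pow_two] at h2
    exact le_of_mul_le_mul_right h2 h0


/-- Infinite version: if `‖xⱼ‖·‖fⱼ‖ ≥ b` for all `j ∈ ℕ` and every finite initial segment
satisfies the unconditional multiplier bound `C`, then with `dⱼ = ‖xⱼ‖^(-1/2) ‖fⱼ‖^(1/2)`,
both `(dⱼ xⱼ)` and `(dⱼ⁻¹ fⱼ)` are Bessel with Bessel bound `b⁻¹ C²` (equivalently, every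
finite initial segment is Bessel with that bound). -/
theorem bessel_bound_parallelogram_infinite
    {H : Type*} [NormedAddCommGroup H] [InnerProductSpace ℂ H]
    (b C : ℝ) (hb : 0 < b) (hC : 0 < C) (x f : ℕ → H)
    (hnorm : ∀ j, b ≤ ‖x j‖ * ‖f j‖)
    (hunc : ∀ (n : ℕ) (v : H) (ε : ℕ → ℂ), (∀ j, ‖ε j‖ = 1) →
      ‖∑ j ∈ Finset.range n, (ε j * ⟪v, f j⟫) • x j‖ ≤ C * ‖v‖)
    (d : ℕ → ℝ)
    (hd : ∀ j, d j = ‖x j‖ ^ (-(1 / 2) : ℝ) * ‖f j‖ ^ ((1 / 2) : ℝ)) :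
    (∀ (n : ℕ) (v : H),
      ∑ j ∈ Finset.range n, ‖⟪v, (d j : ℂ) • x j⟫‖ ^ 2 ≤ b⁻¹ * C ^ 2 * ‖v‖ ^ 2) ∧
    (∀ (n : ℕ) (v : H),
      ∑ j ∈ Finset.range n, ‖⟪v, ((d j : ℂ))⁻¹ • f j⟫‖ ^ 2 ≤ b⁻¹ * C ^ 2 * ‖v‖ ^ 2) := by
  -- basic positivity
  have hx : ∀ j, 0 < ‖x j‖ := fun j => by
    by_contra h
    push_neg at h
    have := hnorm j
    nlinarith [norm_nonneg (x j), norm_nonneg (f j)]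
  have hf : ∀ j, 0 < ‖f j‖ := fun j => by
    by_contra h
    push_neg at h
    have := hnorm j
    nlinarith [norm_nonneg (x j), norm_nonneg (f j)]
  have hdpos : ∀ j, 0 < d j := fun j => by
    rw [hd j]
    exact mul_pos (Real.rpow_pos_of_pos (hx j) _) (Real.rpow_pos_of_pos (hf j) _)
  have hdsq : ∀ j, d j ^ 2 = ‖x j‖⁻¹ * ‖f j‖ := fun j => by
    rw [pow_two, hd j, mul_mul_mul_comm, ← Real.rpow_add (hx j), ← Real.rpow_add (hf j)]
    norm_num [Real.rpow_neg_one]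
  -- analysis bound for x-side squares
  have hXside : ∀ (n : ℕ) (w : H),
      ∑ j ∈ Finset.range n, ‖f j‖ ^ 2 * ‖⟪w, x j⟫‖ ^ 2 ≤ C ^ 2 * ‖w‖ ^ 2 := by
    intro n w
    obtain ⟨ε, hε, hsum⟩ := exists_signs_aux n (fun j => (⟪w, x j⟫ : ℂ) • f j)
    have h1 : ∑ j ∈ Finset.range n, ‖f j‖ ^ 2 * ‖⟪w, x j⟫‖ ^ 2
        = ∑ j ∈ Finset.range n, ‖(⟪w, x j⟫ : ℂ) • f j‖ ^ 2 := by
      refine Finset.sum_congr rfl fun j _ => ?_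
      rw [norm_smul, mul_pow]
      ring
    have h2 : ∑ j ∈ Finset.range n, ε j • ((⟪w, x j⟫ : ℂ) • f j)
        = ∑ j ∈ Finset.range n, (ε j * ⟪w, x j⟫) • f j := by
      refine Finset.sum_congr rfl fun j _ => ?_
      rw [smul_smul]
    have h3 := adjoint_bound C hC x f hunc n w ε hε
    rw [h1]
    calc ∑ j ∈ Finset.range n, ‖(⟪w, x j⟫ : ℂ) • f j‖ ^ 2
        ≤ ‖∑ j ∈ Finset.range n, ε j • ((⟪w, x j⟫ : ℂ) • f j)‖ ^ 2 := hsum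
      _ ≤ (C * ‖w‖) ^ 2 := by rw [h2]; exact pow_le_pow_left₀ (norm_nonneg _) h3 2
      _ = C ^ 2 * ‖w‖ ^ 2 := by ring
  have hFside : ∀ (n : ℕ) (w : H),
      ∑ j ∈ Finset.range n, ‖x j‖ ^ 2 * ‖⟪w, f j⟫‖ ^ 2 ≤ C ^ 2 * ‖w‖ ^ 2 := by
    intro n w
    obtain ⟨ε, hε, hsum⟩ := exists_signs_aux n (fun j => (⟪w, f j⟫ : ℂ) • x j)
    have h1 : ∑ j ∈ Finset.range n, ‖x j‖ ^ 2 * ‖⟪w, f j⟫‖ ^ 2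
        = ∑ j ∈ Finset.range n, ‖(⟪w, f j⟫ : ℂ) • x j‖ ^ 2 := by
      refine Finset.sum_congr rfl fun j _ => ?_
      rw [norm_smul, mul_pow]
      ring
    have h2 : ∑ j ∈ Finset.range n, ε j • ((⟪w, f j⟫ : ℂ) • x j)
        = ∑ j ∈ Finset.range n, (ε j * ⟪w, f j⟫) • x j := by
      refine Finset.sum_congr rfl fun j _ => ?_
      rw [smul_smul]
    have h3 := hunc n w ε hε
    rw [h1]
    calc ∑ j ∈ Finset.range n, ‖(⟪w, f j⟫ : ℂ) • x j‖ ^ 2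
        ≤ ‖∑ j ∈ Finset.range n, ε j • ((⟪w, f j⟫ : ℂ) • x j)‖ ^ 2 := hsum
      _ ≤ (C * ‖w‖) ^ 2 := by rw [h2]; exact pow_le_pow_left₀ (norm_nonneg _) h3 2
      _ = C ^ 2 * ‖w‖ ^ 2 := by ring
  constructor
  · intro n v
    have key : ∀ j, ‖⟪v, (d j : ℂ) • x j⟫‖ ^ 2 ≤ b⁻¹ * (‖f j‖ ^ 2 * ‖⟪v, x j⟫‖ ^ 2) := by
      intro j
      rw [inner_smul_right, norm_mul, Complex.norm_real,
        Real.norm_of_nonneg (hdpos j).le, mul_pow, hdsq j]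
      have hle : ‖x j‖⁻¹ * ‖f j‖ ≤ b⁻¹ * ‖f j‖ ^ 2 := by
        have h1 : ‖x j‖⁻¹ * ‖f j‖ = (‖x j‖ * ‖f j‖)⁻¹ * ‖f j‖ ^ 2 := by
          field_simp [(hx j).ne', (hf j).ne']
        rw [h1]
        exact mul_le_mul_of_nonneg_right (inv_anti₀ hb (hnorm j)) (by positivity)
      calc ‖x j‖⁻¹ * ‖f j‖ * ‖⟪v, x j⟫‖ ^ 2
          ≤ b⁻¹ * ‖f j‖ ^ 2 * ‖⟪v, x j⟫‖ ^ 2 := by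
            apply mul_le_mul_of_nonneg_right hle (by positivity)
        _ = b⁻¹ * (‖f j‖ ^ 2 * ‖⟪v, x j⟫‖ ^ 2) := by ring
    calc ∑ j ∈ Finset.range n, ‖⟪v, (d j : ℂ) • x j⟫‖ ^ 2
        ≤ ∑ j ∈ Finset.range n, b⁻¹ * (‖f j‖ ^ 2 * ‖⟪v, x j⟫‖ ^ 2) :=
          Finset.sum_le_sum fun j _ => key j
      _ = b⁻¹ * ∑ j ∈ Finset.range n, ‖f j‖ ^ 2 * ‖⟪v, x j⟫‖ ^ 2 := by
          rw [Finset.mul_sum]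
      _ ≤ b⁻¹ * (C ^ 2 * ‖v‖ ^ 2) := by
          apply mul_le_mul_of_nonneg_left (hXside n v) (by positivity)
      _ = b⁻¹ * C ^ 2 * ‖v‖ ^ 2 := by ring
  · intro n v
    have key : ∀ j, ‖⟪v, ((d j : ℂ))⁻¹ • f j⟫‖ ^ 2 ≤ b⁻¹ * (‖x j‖ ^ 2 * ‖⟪v, f j⟫‖ ^ 2) := by
      intro j
      rw [inner_smul_right, norm_mul, norm_inv, Complex.norm_real,
        Real.norm_of_nonneg (hdpos j).le, mul_pow, inv_pow, hdsq j]
      have hinv : (‖x j‖⁻¹ * ‖f j‖)⁻¹ = ‖x j‖ * ‖f j‖⁻¹ := by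
        rw [mul_inv, inv_inv]
      rw [hinv]
      have hle : ‖x j‖ * ‖f j‖⁻¹ ≤ b⁻¹ * ‖x j‖ ^ 2 := by
        have h1 : ‖x j‖ * ‖f j‖⁻¹ = (‖x j‖ * ‖f j‖)⁻¹ * ‖x j‖ ^ 2 := by
          field_simp [(hx j).ne', (hf j).ne']
        rw [h1]
        exact mul_le_mul_of_nonneg_right (inv_anti₀ hb (hnorm j)) (by positivity)
      calc ‖x j‖ * ‖f j‖⁻¹ * ‖⟪v, f j⟫‖ ^ 2
          ≤ b⁻¹ * ‖x j‖ ^ 2 * ‖⟪v, f j⟫‖ ^ 2 := by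
            apply mul_le_mul_of_nonneg_right hle (by positivity)
        _ = b⁻¹ * (‖x j‖ ^ 2 * ‖⟪v, f j⟫‖ ^ 2) := by ring
    calc ∑ j ∈ Finset.range n, ‖⟪v, ((d j : ℂ))⁻¹ • f j⟫‖ ^ 2
        ≤ ∑ j ∈ Finset.range n, b⁻¹ * (‖x j‖ ^ 2 * ‖⟪v, f j⟫‖ ^ 2) :=
          Finset.sum_le_sum fun j _ => key j
      _ = b⁻¹ * ∑ j ∈ Finset.range n, ‖x j‖ ^ 2 * ‖⟪v, f j⟫‖ ^ 2 := by
          rw [Finset.mul_sum]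
      _ ≤ b⁻¹ * (C ^ 2 * ‖v‖ ^ 2) := by
          apply mul_le_mul_of_nonneg_left (hFside n v) (by positivity)
      _ = b⁻¹ * C ^ 2 * ‖v‖ ^ 2 := by ring
end

section
/- Let (x_j)_{j=1}^N and (f_j)_{j=1}^N be finite frames for ℂ^M with ‖x_j‖ = ‖f_j‖ for all 1 ≤ j ≤ N, and let A > 0 be a lower frame bound for (x_j)_{j=1}^N (or for (f_j)_{j=1}^N). Then for every sequence of nonzero scalars (d_j)_{j=1}^N, if B is a Bessel bound for both (d_j x_j)_{j=1}^N and (d_j^{-1} f_j)_{j=1}^N, then B ≥ A. -/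
open scoped ComplexInnerProductSpace

lemma sum_inner_single_sq (M : ℕ) (y : EuclideanSpace ℂ (Fin M)) :
    ∑ i, ‖⟪(EuclideanSpace.single i 1 : EuclideanSpace ℂ (Fin M)), y⟫‖ ^ 2 = ‖y‖ ^ 2 := by
  have h : ∀ i, ⟪(EuclideanSpace.single i 1 : EuclideanSpace ℂ (Fin M)), y⟫ = y i := by
    intro i
    rw [EuclideanSpace.inner_single_left]
    simp
  simp_rw [h]
  rw [EuclideanSpace.norm_eq, Real.sq_sqrt]
  positivity

/-- If `(xⱼ)` and `(fⱼ)` are finite frames for `ℂ^M` with `‖xⱼ‖ = ‖fⱼ‖` for all `j`, and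
`A > 0` is a lower frame bound for `(xⱼ)` or for `(fⱼ)`, then for any nonzero scalars
`(dⱼ)`, any common Bessel bound `B` for `(dⱼ xⱼ)` and `(dⱼ⁻¹ fⱼ)` satisfies `B ≥ A`. -/
theorem lower_bound_for_shifted_weights
    (M N : ℕ) (hM : 0 < M) (x f : Fin N → EuclideanSpace ℂ (Fin M))
    (hxframe : ∃ A' B' : ℝ, 0 < A' ∧ ∀ v : EuclideanSpace ℂ (Fin M),
      A' * ‖v‖ ^ 2 ≤ ∑ j, ‖⟪v, x j⟫‖ ^ 2 ∧ ∑ j, ‖⟪v, x j⟫‖ ^ 2 ≤ B' * ‖v‖ ^ 2)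
    (hfframe : ∃ A' B' : ℝ, 0 < A' ∧ ∀ v : EuclideanSpace ℂ (Fin M),
      A' * ‖v‖ ^ 2 ≤ ∑ j, ‖⟪v, f j⟫‖ ^ 2 ∧ ∑ j, ‖⟪v, f j⟫‖ ^ 2 ≤ B' * ‖v‖ ^ 2)
    (hnorm : ∀ j, ‖x j‖ = ‖f j‖)
    (A : ℝ) (hA : 0 < A)
    (hlow : (∀ v : EuclideanSpace ℂ (Fin M), A * ‖v‖ ^ 2 ≤ ∑ j, ‖⟪v, x j⟫‖ ^ 2) ∨
      (∀ v : EuclideanSpace ℂ (Fin M), A * ‖v‖ ^ 2 ≤ ∑ j, ‖⟪v, f j⟫‖ ^ 2))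
    (d : Fin N → ℂ) (hd : ∀ j, d j ≠ 0) (B : ℝ)
    (hBx : ∀ v : EuclideanSpace ℂ (Fin M),
      ∑ j, ‖⟪v, d j • x j⟫‖ ^ 2 ≤ B * ‖v‖ ^ 2)
    (hBf : ∀ v : EuclideanSpace ℂ (Fin M),
      ∑ j, ‖⟪v, (d j)⁻¹ • f j⟫‖ ^ 2 ≤ B * ‖v‖ ^ 2) :
    A ≤ B := by
  set e : Fin M → EuclideanSpace ℂ (Fin M) := fun i => EuclideanSpace.single i 1 with he
  have hen : ∀ i, ‖e i‖ = 1 := by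
    intro i; simp [he, EuclideanSpace.norm_single]
  -- trace of a Bessel system
  have trace_le : ∀ (y : Fin N → EuclideanSpace ℂ (Fin M)),
      (∀ v : EuclideanSpace ℂ (Fin M), ∑ j, ‖⟪v, y j⟫‖ ^ 2 ≤ B * ‖v‖ ^ 2) →
      ∑ j, ‖y j‖ ^ 2 ≤ B * M := by
    intro y hy
    have h1 : ∑ i, ∑ j, ‖⟪e i, y j⟫‖ ^ 2 ≤ ∑ i : Fin M, B * 1 := by
      apply Finset.sum_le_sum
      intro i _
      have := hy (e i)
      rwa [hen i, one_pow] at this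
    rw [Finset.sum_comm] at h1
    have h2 : ∀ j, ∑ i, ‖⟪e i, y j⟫‖ ^ 2 = ‖y j‖ ^ 2 := fun j => sum_inner_single_sq M (y j)
    simp_rw [h2] at h1
    simp only [Finset.sum_const, Finset.card_univ, Fintype.card_fin, nsmul_eq_mul] at h1
    linarith
  -- trace of a frame from below
  have trace_ge : ∀ (y : Fin N → EuclideanSpace ℂ (Fin M)),
      (∀ v : EuclideanSpace ℂ (Fin M), A * ‖v‖ ^ 2 ≤ ∑ j, ‖⟪v, y j⟫‖ ^ 2) →
      A * M ≤ ∑ j, ‖y j‖ ^ 2 := by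
    intro y hy
    have h1 : ∑ i : Fin M, A * 1 ≤ ∑ i, ∑ j, ‖⟪e i, y j⟫‖ ^ 2 := by
      apply Finset.sum_le_sum
      intro i _
      have := hy (e i)
      rwa [hen i, one_pow] at this
    rw [Finset.sum_comm] at h1
    have h2 : ∀ j, ∑ i, ‖⟪e i, y j⟫‖ ^ 2 = ‖y j‖ ^ 2 := fun j => sum_inner_single_sq M (y j)
    simp_rw [h2] at h1
    simp only [Finset.sum_const, Finset.card_univ, Fintype.card_fin, nsmul_eq_mul] at h1
    linarith
  have hS : A * M ≤ ∑ j, ‖x j‖ ^ 2 := by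
    rcases hlow with h | h
    · exact trace_ge x h
    · have := trace_ge f h
      simpa [hnorm] using this
  have hTx : ∑ j, ‖d j • x j‖ ^ 2 ≤ B * M := trace_le _ hBx
  have hTf : ∑ j, ‖(d j)⁻¹ • f j‖ ^ 2 ≤ B * M := trace_le _ hBf
  -- Cauchy–Schwarz
  have hmul : ∀ j, ‖d j • x j‖ * ‖(d j)⁻¹ • f j‖ = ‖x j‖ ^ 2 := by
    intro j
    have hdj : ‖d j‖ ≠ 0 := norm_ne_zero_iff.mpr (hd j)
    rw [norm_smul, norm_smul, norm_inv, ← hnorm j, mul_mul_mul_comm,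
      mul_inv_cancel₀ hdj, one_mul, pow_two]
  have hCS := Finset.sum_mul_sq_le_sq_mul_sq Finset.univ
    (fun j => ‖d j • x j‖) (fun j => ‖(d j)⁻¹ • f j‖)
  simp_rw [hmul] at hCS
  have hS0 : (0:ℝ) ≤ ∑ j, ‖x j‖ ^ 2 := by positivity
  have hTx0 : (0:ℝ) ≤ ∑ j, ‖d j • x j‖ ^ 2 := by positivity
  have hTf0 : (0:ℝ) ≤ ∑ j, ‖(d j)⁻¹ • f j‖ ^ 2 := by positivity
  have hBM0 : (0:ℝ) ≤ B * M := le_trans hTx0 hTx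
  have hM' : (0:ℝ) < M := by exact_mod_cast hM
  have hsq : (∑ j, ‖x j‖ ^ 2) ^ 2 ≤ (B * M) ^ 2 := by
    calc (∑ j, ‖x j‖ ^ 2) ^ 2 ≤ _ := hCS
    _ ≤ (B * M) ^ 2 := by nlinarith [mul_le_mul hTx hTf hTf0 hBM0]
  have hle : (∑ j, ‖x j‖ ^ 2) ≤ B * M := by
    nlinarith
  have : A * M ≤ B * M := le_trans hS hle
  exact le_of_mul_le_mul_right (by linarith [this]) hM'
end

section
/- Let (x_j)_{j=1}^N and (f_j)_{j=1}^N be tight frames for ℂ^M with ‖x_j‖ = ‖f_j‖ for all 1 ≤ j ≤ N. Then both are A-tight for the same constant A = M^{-1} Σ_{j=1}^N ‖x_j‖², and A = min over all sequences of nonzero scalars d = (d_j)_{j=1}^N of max{B_{dX}, B_{d^{-1}F}}, where B_{dX} is the optimal (least) Bessel bound of (d_j x_j)_{j=1}^N and B_{d^{-1}F} is the optimal Bessel bound of (d_j^{-1} f_j)_{j=1}^N; in particular the minimum is attained at d_j = 1 for all j. -/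
open scoped ComplexInnerProductSpace

private lemma basis_sum_sq' (M : ℕ) (y : EuclideanSpace ℂ (Fin M)) :
    ∑ i : Fin M, ‖⟪EuclideanSpace.single i (1:ℂ), y⟫‖ ^ 2 = ‖y‖ ^ 2 := by
  have h : ∀ i, ⟪EuclideanSpace.single i (1:ℂ), y⟫ = y i := by
    intro i; simp [EuclideanSpace.inner_single_left]
  simp only [h]
  rw [EuclideanSpace.norm_eq, Real.sq_sqrt (by positivity)]

private lemma trace_id' (M N : ℕ) (y : Fin N → EuclideanSpace ℂ (Fin M)) :
    ∑ i : Fin M, ∑ j, ‖⟪EuclideanSpace.single i (1:ℂ), y j⟫‖ ^ 2 = ∑ j, ‖y j‖ ^ 2 := by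
  rw [Finset.sum_comm]
  exact Finset.sum_congr rfl fun j _ => basis_sum_sq' M (y j)

private lemma tight_const' (M N : ℕ) (y : Fin N → EuclideanSpace ℂ (Fin M)) (A' : ℝ)
    (h : ∀ v : EuclideanSpace ℂ (Fin M), ∑ j, ‖⟪v, y j⟫‖ ^ 2 = A' * ‖v‖ ^ 2) :
    A' * M = ∑ j, ‖y j‖ ^ 2 := by
  have := trace_id' M N y
  rw [Finset.sum_congr rfl (fun i _ => h (EuclideanSpace.single i 1))] at this
  simpa [EuclideanSpace.norm_single, Finset.sum_const, mul_comm] using this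

/-- The optimal (least) Bessel bound of a finite sequence in `ℂ^M`. -/
noncomputable def optimalBesselBound {M N : ℕ} (y : Fin N → EuclideanSpace ℂ (Fin M)) : ℝ :=
  sInf {B : ℝ | ∀ v : EuclideanSpace ℂ (Fin M), ∑ j, ‖⟪v, y j⟫‖ ^ 2 ≤ B * ‖v‖ ^ 2}

private lemma obb_tight' (M N : ℕ) (hM : 0 < M) (y : Fin N → EuclideanSpace ℂ (Fin M)) (A' : ℝ)
    (h : ∀ v : EuclideanSpace ℂ (Fin M), ∑ j, ‖⟪v, y j⟫‖ ^ 2 = A' * ‖v‖ ^ 2) :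
    optimalBesselBound y = A' := by
  have : IsLeast {B : ℝ | ∀ v : EuclideanSpace ℂ (Fin M),
      ∑ j, ‖⟪v, y j⟫‖ ^ 2 ≤ B * ‖v‖ ^ 2} A' := by
    constructor
    · intro v; exact (h v).le
    · intro B hB
      have hB' := hB (EuclideanSpace.single ⟨0, hM⟩ (1:ℂ))
      rw [h] at hB'
      simpa [EuclideanSpace.norm_single] using hB'
  exact this.csInf_eq

private lemma obb_ge' (M N : ℕ) (hM : 0 < M) (y : Fin N → EuclideanSpace ℂ (Fin M)) :
    (M : ℝ)⁻¹ * ∑ j, ‖y j‖ ^ 2 ≤ optimalBesselBound y := by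
  have hMR : (0:ℝ) < M := by exact_mod_cast hM
  apply le_csInf ⟨_, by
    intro v
    rw [Finset.sum_mul]
    refine Finset.sum_le_sum fun j _ => ?_
    calc ‖⟪v, y j⟫‖ ^ 2 ≤ (‖v‖ * ‖y j‖) ^ 2 :=
          pow_le_pow_left₀ (norm_nonneg _) (norm_inner_le_norm (𝕜 := ℂ) v (y j)) 2
      _ = ‖y j‖ ^ 2 * ‖v‖ ^ 2 := by ring⟩
  intro B hB
  have h2 : ∑ j, ‖y j‖ ^ 2 ≤ B * M := by
    rw [← trace_id' M N y]
    calc ∑ i : Fin M, ∑ j, ‖⟪EuclideanSpace.single i (1:ℂ), y j⟫‖ ^ 2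
        ≤ ∑ _i : Fin M, B * ‖EuclideanSpace.single (𝕜 := ℂ) _i (1:ℂ)‖ ^ 2 :=
          Finset.sum_le_sum fun i _ => hB _
      _ = B * M := by simp [EuclideanSpace.norm_single, Finset.sum_const, mul_comm]
  rw [inv_mul_le_iff₀ hMR, mul_comm]
  exact h2

private lemma obb_zero' (N : ℕ) (y : Fin N → EuclideanSpace ℂ (Fin 0)) :
    optimalBesselBound y = 0 := by
  have hset : {B : ℝ | ∀ v : EuclideanSpace ℂ (Fin 0),
      ∑ j, ‖⟪v, y j⟫‖ ^ 2 ≤ B * ‖v‖ ^ 2} = Set.univ := by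
    ext B
    simp only [Set.mem_setOf_eq, Set.mem_univ, iff_true]
    intro v
    have hv : v = 0 := Subsingleton.elim v 0
    subst hv
    simp
  rw [optimalBesselBound, hset]
  refine Real.sInf_of_not_bddBelow ?_
  rintro ⟨b, hb⟩
  have := hb (Set.mem_univ (b - 1))
  linarith

/-- If `(xⱼ)` and `(fⱼ)` are tight frames for `ℂ^M` with `‖xⱼ‖ = ‖fⱼ‖` for all `j`, then
both are `A`-tight for `A = M⁻¹ ∑ ‖xⱼ‖²`, and `A` is the minimum over all nonzero weight
sequences `d` of `max{B_{dX}, B_{d⁻¹F}}`, the maximum of the optimal Bessel bounds of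
`(dⱼ xⱼ)` and `(dⱼ⁻¹ fⱼ)`; the minimum is attained at `dⱼ = 1`. -/
theorem tight_frames_optimal_weights
    (M N : ℕ) (x f : Fin N → EuclideanSpace ℂ (Fin M))
    (hxtight : ∃ A' : ℝ, 0 < A' ∧ ∀ v : EuclideanSpace ℂ (Fin M),
      ∑ j, ‖⟪v, x j⟫‖ ^ 2 = A' * ‖v‖ ^ 2)
    (hftight : ∃ A' : ℝ, 0 < A' ∧ ∀ v : EuclideanSpace ℂ (Fin M),
      ∑ j, ‖⟪v, f j⟫‖ ^ 2 = A' * ‖v‖ ^ 2)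
    (hnorm : ∀ j, ‖x j‖ = ‖f j‖) :
    (∀ v : EuclideanSpace ℂ (Fin M),
      ∑ j, ‖⟪v, x j⟫‖ ^ 2 = ((M : ℝ)⁻¹ * ∑ j, ‖x j‖ ^ 2) * ‖v‖ ^ 2) ∧
    (∀ v : EuclideanSpace ℂ (Fin M),
      ∑ j, ‖⟪v, f j⟫‖ ^ 2 = ((M : ℝ)⁻¹ * ∑ j, ‖x j‖ ^ 2) * ‖v‖ ^ 2) ∧
    IsLeast {r : ℝ | ∃ d : Fin N → ℂ, (∀ j, d j ≠ 0) ∧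
        r = max (optimalBesselBound (fun j => d j • x j))
          (optimalBesselBound (fun j => (d j)⁻¹ • f j))}
      ((M : ℝ)⁻¹ * ∑ j, ‖x j‖ ^ 2) ∧
    max (optimalBesselBound x) (optimalBesselBound f) = (M : ℝ)⁻¹ * ∑ j, ‖x j‖ ^ 2 := by
  
  rcases Nat.eq_zero_or_pos M with hM0 | hM
  · -- degenerate case M = 0
    subst hM0
    have hx0 : ∀ j, x j = 0 := fun j => Subsingleton.elim _ _
    have hS : ∑ j, ‖x j‖ ^ 2 = 0 := by simp [hx0]
    have hA : ((0 : ℕ) : ℝ)⁻¹ * ∑ j, ‖x j‖ ^ 2 = 0 := by rw [hS]; ring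
    rw [hA]
    refine ⟨?_, ?_, ⟨⟨fun _ => 1, fun j => one_ne_zero, ?_⟩, ?_⟩, ?_⟩
    · intro v
      have hv : v = 0 := Subsingleton.elim _ _
      subst hv; simp
    · intro v
      have hv : v = 0 := Subsingleton.elim _ _
      subst hv; simp
    · rw [obb_zero', obb_zero']; simp
    · rintro r ⟨d, hd, rfl⟩
      rw [obb_zero', obb_zero']; simp
    · rw [obb_zero', obb_zero']; simp
  · -- main case M > 0
    obtain ⟨A', hA'pos, hx⟩ := hxtight
    obtain ⟨A'', hA''pos, hf⟩ := hftight
    have hMR : (0:ℝ) < M := by exact_mod_cast hM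
    have hSx : A' * M = ∑ j, ‖x j‖ ^ 2 := tight_const' M N x A' hx
    have hSf : A'' * M = ∑ j, ‖f j‖ ^ 2 := tight_const' M N f A'' hf
    have hSeq : ∑ j, ‖f j‖ ^ 2 = ∑ j, ‖x j‖ ^ 2 :=
      Finset.sum_congr rfl fun j _ => by rw [hnorm j]
    have hA'eq : A' = (M : ℝ)⁻¹ * ∑ j, ‖x j‖ ^ 2 := by
      rw [← hSx]; field_simp
    have hA''eq : A'' = (M : ℝ)⁻¹ * ∑ j, ‖x j‖ ^ 2 := by
      rw [← hSeq, ← hSf]; field_simp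
    set A := (M : ℝ)⁻¹ * ∑ j, ‖x j‖ ^ 2 with hAdef
    rw [hA'eq] at hx
    rw [hA''eq] at hf
    refine ⟨hx, hf, ⟨⟨fun _ => 1, fun j => one_ne_zero, ?_⟩, ?_⟩, ?_⟩
    · simp only [one_smul, inv_one]
      rw [obb_tight' M N hM x A hx, obb_tight' M N hM f A hf, max_self]
    · rintro r ⟨d, hd, rfl⟩
      have hB1 : (M : ℝ)⁻¹ * ∑ j, ‖d j • x j‖ ^ 2 ≤
          optimalBesselBound (fun j => d j • x j) := obb_ge' M N hM _
      have hB2 : (M : ℝ)⁻¹ * ∑ j, ‖(d j)⁻¹ • f j‖ ^ 2 ≤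
          optimalBesselBound (fun j => (d j)⁻¹ • f j) := obb_ge' M N hM _
      have key : 2 * A ≤ (M : ℝ)⁻¹ * ∑ j, ‖d j • x j‖ ^ 2 +
          (M : ℝ)⁻¹ * ∑ j, ‖(d j)⁻¹ • f j‖ ^ 2 := by
        rw [hAdef, ← mul_add, ← Finset.sum_add_distrib, mul_comm 2, mul_assoc]
        refine mul_le_mul_of_nonneg_left ?_ (inv_nonneg.mpr hMR.le)
        rw [Finset.sum_mul]
        refine Finset.sum_le_sum fun j _ => ?_
        rw [norm_smul, norm_smul, mul_pow, mul_pow, ← hnorm j, norm_inv]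
        have ha : (0:ℝ) < ‖d j‖ ^ 2 := by
          have := norm_pos_iff.mpr (hd j); positivity
        have hamg : 2 ≤ ‖d j‖ ^ 2 + (‖d j‖⁻¹) ^ 2 := by
          rw [inv_pow]
          nlinarith [sq_nonneg (‖d j‖ ^ 2 - 1), mul_inv_cancel₀ (ne_of_gt ha)]
        nlinarith [sq_nonneg (‖x j‖), hamg, sq_nonneg ‖x j‖]
      have h2max : (M : ℝ)⁻¹ * ∑ j, ‖d j • x j‖ ^ 2 +
          (M : ℝ)⁻¹ * ∑ j, ‖(d j)⁻¹ • f j‖ ^ 2 ≤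
          2 * max (optimalBesselBound (fun j => d j • x j))
            (optimalBesselBound (fun j => (d j)⁻¹ • f j)) := by
        have := le_max_left (optimalBesselBound (fun j => d j • x j))
          (optimalBesselBound (fun j => (d j)⁻¹ • f j))
        have := le_max_right (optimalBesselBound (fun j => d j • x j))
          (optimalBesselBound (fun j => (d j)⁻¹ • f j))
        linarith
      linarith
    · rw [obb_tight' M N hM x A hx, obb_tight' M N hM f A hf, max_self]
end

section
/- Let C ≥ 1 and M, N ∈ ℕ. Suppose (x_j)_{j=1}^N and (f_j)_{j=1}^N are both equi-norm tight frames for ℂ^M (i.e., each is a tight frame and within each family all vectors have the same norm), and ‖Σ_{j=1}^N ε_j ⟨x, f_j⟩ x_j‖ ≤ C‖x‖ for all x ∈ ℂ^M and all scalars ε_j with |ε_j| = 1. Set d = ‖x_1‖^{-1/2} ‖f_1‖^{1/2}. Then (d x_j)_{j=1}^N and (d^{-1} f_j)_{j=1}^N are both Bessel with Bessel bound N^{1/2} M^{-1/2} C. -/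
open scoped ComplexInnerProductSpace

noncomputable def rr (N : ℕ) (s : Fin N → Bool) (j : Fin N) : ℝ := if s j then 1 else -1

lemma rad_sign_sum (N : ℕ) (j k : Fin N) (hjk : j ≠ k) :
    ∑ s : Fin N → Bool, rr N s j * rr N s k = 0 := by
  have key : ∀ s : Fin N → Bool,
      rr N (Function.update s j (!(s j))) j * rr N (Function.update s j (!(s j))) k
        = -(rr N s j * rr N s k) := by
    intro s
    have h1 : Function.update s j (!(s j)) j = !(s j) := Function.update_self _ _ _
    have h2 : Function.update s j (!(s j)) k = s k := Function.update_of_ne (Ne.symm hjk) _ _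
    simp only [rr, h1, h2]
    cases s j <;> cases s k <;> norm_num
  have hinv : Function.Involutive (fun s : Fin N → Bool => Function.update s j (!(s j))) := by
    intro s
    simp [Function.update_self, Function.update_idem]
  have := Equiv.sum_comp hinv.toPerm (fun s => rr N s j * rr N s k)
  simp only [Function.Involutive.coe_toPerm] at this
  have h2 : ∑ s : Fin N → Bool, rr N s j * rr N s k
      = -∑ s : Fin N → Bool, rr N s j * rr N s k := by
    conv_lhs => rw [← this]
    rw [← Finset.sum_neg_distrib]
    exact Finset.sum_congr rfl fun s _ => key s
  linarith

lemma rad_diag_sum (N : ℕ) (j : Fin N) :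
    ∑ s : Fin N → Bool, rr N s j * rr N s j = 2 ^ N := by
  have : ∀ s : Fin N → Bool, rr N s j * rr N s j = 1 := by
    intro s; simp only [rr]; cases s j <;> norm_num
  simp only [this, Finset.sum_const, Finset.card_univ, Fintype.card_fun, Fintype.card_bool,
    Fintype.card_fin, nsmul_eq_mul, mul_one]
  push_cast; ring

lemma rad_sum {E : Type*} [NormedAddCommGroup E] [InnerProductSpace ℂ E] (N : ℕ)
    (u : Fin N → E) :
    ∑ s : Fin N → Bool, ‖∑ j, ((rr N s j : ℂ)) • u j‖ ^ 2 = 2 ^ N * ∑ j, ‖u j‖ ^ 2 := by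
  have hfix : ∀ s : Fin N → Bool, ‖∑ j, ((rr N s j : ℂ)) • u j‖ ^ 2
      = ∑ j, ∑ k, (rr N s j * rr N s k) * Complex.re ⟪u j, u k⟫ := by
    intro s
    have h1 : (⟪∑ j, ((rr N s j : ℂ)) • u j, ∑ k, ((rr N s k : ℂ)) • u k⟫ : ℂ)
        = ∑ j, ∑ k, (((rr N s j * rr N s k : ℝ)) : ℂ) * ⟪u j, u k⟫ := by
      rw [sum_inner]
      refine Finset.sum_congr rfl fun j _ => ?_
      rw [inner_sum]
      refine Finset.sum_congr rfl fun k _ => ?_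
      rw [inner_smul_left, inner_smul_right]
      push_cast
      rw [Complex.conj_ofReal]
      ring
    have h2 := @inner_self_eq_norm_sq ℂ _ _ _ _ (∑ j, ((rr N s j : ℂ)) • u j)
    rw [← h2, h1]
    simp [Complex.re_sum, Complex.re_ofReal_mul]
  calc ∑ s : Fin N → Bool, ‖∑ j, ((rr N s j : ℂ)) • u j‖ ^ 2
      = ∑ s : Fin N → Bool, ∑ j, ∑ k, (rr N s j * rr N s k) * Complex.re ⟪u j, u k⟫ :=
        Finset.sum_congr rfl fun s _ => hfix s
    _ = ∑ j, ∑ k, (∑ s : Fin N → Bool, rr N s j * rr N s k) * Complex.re ⟪u j, u k⟫ := by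
        rw [Finset.sum_comm]
        refine Finset.sum_congr rfl fun j _ => ?_
        rw [Finset.sum_comm]
        refine Finset.sum_congr rfl fun k _ => ?_
        rw [Finset.sum_mul]
    _ = ∑ j, (2 ^ N : ℝ) * Complex.re ⟪u j, u j⟫ := by
        refine Finset.sum_congr rfl fun j _ => ?_
        rw [Finset.sum_eq_single j]
        · rw [rad_diag_sum]
        · intro k _ hk
          rw [rad_sign_sum N j k (Ne.symm hk), zero_mul]
        · intro h; exact absurd (Finset.mem_univ j) h
    _ = 2 ^ N * ∑ j, ‖u j‖ ^ 2 := by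
        rw [Finset.mul_sum]
        refine Finset.sum_congr rfl fun j _ => ?_
        congr 1
        rw [← @inner_self_eq_norm_sq ℂ]
        simp [RCLike.re_to_complex]

lemma rr_norm (N : ℕ) (s : Fin N → Bool) (j : Fin N) : ‖((rr N s j : ℝ) : ℂ)‖ = 1 := by
  cases h : s j <;> simp [rr, h]

/-- If `(xⱼ)` and `(fⱼ)` are equi-norm tight frames for `ℂ^M` satisfying the unconditional
multiplier bound `C ≥ 1`, then with `d = ‖x₁‖^(-1/2) ‖f₁‖^(1/2)`, both `(d xⱼ)` and
`(d⁻¹ fⱼ)` are Bessel with Bessel bound `N^(1/2) M^(-1/2) C`. -/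
theorem equi_norm_tight_frames_bessel
    (C : ℝ) (hC : 1 ≤ C) (M N : ℕ) (hN : 0 < N)
    (x f : Fin N → EuclideanSpace ℂ (Fin M))
    (hxtight : ∃ A : ℝ, 0 < A ∧ ∀ v : EuclideanSpace ℂ (Fin M),
      ∑ j, ‖⟪v, x j⟫‖ ^ 2 = A * ‖v‖ ^ 2)
    (hftight : ∃ A : ℝ, 0 < A ∧ ∀ v : EuclideanSpace ℂ (Fin M),
      ∑ j, ‖⟪v, f j⟫‖ ^ 2 = A * ‖v‖ ^ 2)
    (hxeq : ∀ i j, ‖x i‖ = ‖x j‖) (hfeq : ∀ i j, ‖f i‖ = ‖f j‖)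
    (hunc : ∀ (v : EuclideanSpace ℂ (Fin M)) (ε : Fin N → ℂ), (∀ j, ‖ε j‖ = 1) →
      ‖∑ j, (ε j * ⟪v, f j⟫) • x j‖ ≤ C * ‖v‖)
    (d : ℝ)
    (hd : d = ‖x ⟨0, hN⟩‖ ^ (-(1 / 2) : ℝ) * ‖f ⟨0, hN⟩‖ ^ ((1 / 2) : ℝ)) :
    (∀ v : EuclideanSpace ℂ (Fin M),
      ∑ j, ‖⟪v, (d : ℂ) • x j⟫‖ ^ 2 ≤ Real.sqrt N * (Real.sqrt M)⁻¹ * C * ‖v‖ ^ 2) ∧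
    (∀ v : EuclideanSpace ℂ (Fin M),
      ∑ j, ‖⟪v, ((d : ℂ))⁻¹ • f j⟫‖ ^ 2 ≤ Real.sqrt N * (Real.sqrt M)⁻¹ * C * ‖v‖ ^ 2) := by
  by_cases hM : 0 < M
  case neg =>
    have hM0 : M = 0 := by omega
    subst hM0
    have hv0 : ∀ v : EuclideanSpace ℂ (Fin 0), v = 0 := by
      intro v; ext i; exact i.elim0
    constructor <;> intro v <;> rw [hv0 v] <;> simp
  case pos =>
  obtain ⟨Ax, hAx0, hAx⟩ := hxtight
  obtain ⟨Af, hAf0, hAf⟩ := hftight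
  set a := ‖x ⟨0, hN⟩‖ with ha_def
  set b := ‖f ⟨0, hN⟩‖ with hb_def
  set e : Fin M → EuclideanSpace ℂ (Fin M) := fun i => EuclideanSpace.single i 1 with he_def
  have he_norm : ∀ i, ‖e i‖ = 1 := by
    intro i; rw [he_def]; rw [EuclideanSpace.norm_single]; simp
  have he_inner : ∀ (i) (w : EuclideanSpace ℂ (Fin M)), ⟪e i, w⟫ = w i := by
    intro i w; rw [he_def]; rw [EuclideanSpace.inner_single_left]; simp
  have hnorm_sq : ∀ w : EuclideanSpace ℂ (Fin M), ‖w‖ ^ 2 = ∑ i, ‖w i‖ ^ 2 := by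
    intro w; rw [EuclideanSpace.norm_eq, Real.sq_sqrt]; positivity
  have hMR : (0:ℝ) < M := by exact_mod_cast hM
  have hNR : (0:ℝ) < N := by exact_mod_cast hN
  have hC0 : (0:ℝ) < C := lt_of_lt_of_le one_pos hC
  -- frame constants
  have hframe : ∀ (A : ℝ) (y : Fin N → EuclideanSpace ℂ (Fin M)),
      (∀ v : EuclideanSpace ℂ (Fin M), ∑ j, ‖⟪v, y j⟫‖ ^ 2 = A * ‖v‖ ^ 2) →
      (∀ i j, ‖y i‖ = ‖y j‖) →
      A * M = N * ‖y ⟨0, hN⟩‖ ^ 2 := by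
    intro A y hA0 hyeq
    have h1 : ∑ i : Fin M, ∑ j, ‖⟪e i, y j⟫‖ ^ 2 = A * M := by
      have hterm : ∀ i : Fin M, ∑ j, ‖⟪e i, y j⟫‖ ^ 2 = A := by
        intro i; rw [hA0 (e i), he_norm]; ring
      calc ∑ i : Fin M, ∑ j, ‖⟪e i, y j⟫‖ ^ 2 = ∑ _i : Fin M, A :=
            Finset.sum_congr rfl fun i _ => hterm i
        _ = A * M := by simp [Finset.sum_const, mul_comm]
    have h2 : ∑ i : Fin M, ∑ j, ‖⟪e i, y j⟫‖ ^ 2 = ∑ j, ‖y j‖ ^ 2 := by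
      rw [Finset.sum_comm]
      refine Finset.sum_congr rfl fun j _ => ?_
      rw [hnorm_sq (y j)]
      exact Finset.sum_congr rfl fun i _ => by rw [he_inner]
    have h3 : ∑ j, ‖y j‖ ^ 2 = N * ‖y ⟨0, hN⟩‖ ^ 2 := by
      calc ∑ j, ‖y j‖ ^ 2 = ∑ _j : Fin N, ‖y ⟨0, hN⟩‖ ^ 2 :=
            Finset.sum_congr rfl fun j _ => by rw [hyeq j ⟨0, hN⟩]
        _ = N * ‖y ⟨0, hN⟩‖ ^ 2 := by simp [Finset.sum_const, mul_comm]
    rw [← h1, h2, h3]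
  have hAxM : Ax * M = N * a ^ 2 := hframe Ax x hAx hxeq
  have hAfM : Af * M = N * b ^ 2 := hframe Af f hAf hfeq
  have ha : 0 < a := by
    rcases (norm_nonneg (x ⟨0, hN⟩)).lt_or_eq with h | h
    · exact h
    · exfalso
      have h' : a = 0 := by rw [ha_def, ← h]
      rw [h'] at hAxM; nlinarith
  have hb : 0 < b := by
    rcases (norm_nonneg (f ⟨0, hN⟩)).lt_or_eq with h | h
    · exact h
    · exfalso
      have h' : b = 0 := by rw [hb_def, ← h]
      rw [h'] at hAfM; nlinarith
  -- key inequality via Rademacher averaging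
  have key : (N : ℝ) * (a ^ 2 * b ^ 2) ≤ M * C ^ 2 := by
    set G : (Fin N → Bool) → ℝ :=
      fun s => ∑ i : Fin M, ‖∑ j, (((rr N s j : ℝ) : ℂ) * ⟪e i, f j⟫) • x j‖ ^ 2 with hG
    have hub : ∀ s, G s ≤ M * C ^ 2 := by
      intro s
      have hterm : ∀ i : Fin M, ‖∑ j, (((rr N s j : ℝ) : ℂ) * ⟪e i, f j⟫) • x j‖ ^ 2 ≤ C ^ 2 := by
        intro i
        have h1 := hunc (e i) (fun j => ((rr N s j : ℝ) : ℂ)) (fun j => rr_norm N s j)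
        rw [he_norm, mul_one] at h1
        exact pow_le_pow_left₀ (norm_nonneg _) h1 2
      calc G s ≤ ∑ _i : Fin M, C ^ 2 := Finset.sum_le_sum fun i _ => hterm i
        _ = M * C ^ 2 := by simp [Finset.sum_const, mul_comm]
    have havg : ∑ s : Fin N → Bool, G s = 2 ^ N * ((N : ℝ) * (a ^ 2 * b ^ 2)) := by
      calc ∑ s : Fin N → Bool, G s
          = ∑ i : Fin M, ∑ s : Fin N → Bool,
              ‖∑ j, ((rr N s j : ℝ) : ℂ) • ((⟪e i, f j⟫ : ℂ) • x j)‖ ^ 2 := by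
            rw [hG, Finset.sum_comm]
            refine Finset.sum_congr rfl fun i _ => Finset.sum_congr rfl fun s _ => ?_
            simp only [mul_smul]
        _ = ∑ i : Fin M, 2 ^ N * ∑ j, ‖(⟪e i, f j⟫ : ℂ) • x j‖ ^ 2 :=
            Finset.sum_congr rfl fun i _ => rad_sum N _
        _ = 2 ^ N * ∑ i : Fin M, ∑ j, ‖f j i‖ ^ 2 * ‖x j‖ ^ 2 := by
            rw [← Finset.mul_sum]
            refine congrArg _ (Finset.sum_congr rfl fun i _ => Finset.sum_congr rfl fun j _ => ?_)
            rw [norm_smul, mul_pow, he_inner]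
        _ = 2 ^ N * ((N : ℝ) * (a ^ 2 * b ^ 2)) := by
            refine congrArg _ ?_
            rw [Finset.sum_comm]
            have hterm : ∀ j, ∑ i, ‖f j i‖ ^ 2 * ‖x j‖ ^ 2 = b ^ 2 * a ^ 2 := by
              intro j
              rw [← Finset.sum_mul, ← hnorm_sq (f j), hxeq j ⟨0, hN⟩, hfeq j ⟨0, hN⟩]
            calc ∑ j, ∑ i, ‖f j i‖ ^ 2 * ‖x j‖ ^ 2 = ∑ _j : Fin N, b ^ 2 * a ^ 2 :=
                  Finset.sum_congr rfl fun j _ => hterm j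
              _ = (N : ℝ) * (a ^ 2 * b ^ 2) := by
                  rw [Finset.sum_const, Finset.card_univ, Fintype.card_fin, nsmul_eq_mul]; ring
    have hne : (Finset.univ : Finset (Fin N → Bool)).Nonempty := Finset.univ_nonempty
    obtain ⟨s, _, hs⟩ := Finset.exists_le_of_sum_le hne (f := fun _ => (N : ℝ) * (a ^ 2 * b ^ 2))
      (g := G) (by
        have hc : ∑ _s : Fin N → Bool, ((N : ℝ) * (a ^ 2 * b ^ 2))
            = 2 ^ N * ((N : ℝ) * (a ^ 2 * b ^ 2)) := by
          rw [Finset.sum_const, Finset.card_univ, Fintype.card_fun, Fintype.card_bool,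
            Fintype.card_fin, nsmul_eq_mul]
          push_cast; ring
        exact le_of_eq (hc.trans havg.symm))
    exact le_trans hs (hub s)
  -- square roots
  set sN := Real.sqrt N with hsN_def
  set sM := Real.sqrt M with hsM_def
  have hsN : sN ^ 2 = N := Real.sq_sqrt (by positivity)
  have hsM : sM ^ 2 = M := Real.sq_sqrt (by positivity)
  have hsN0 : 0 < sN := Real.sqrt_pos.mpr hNR
  have hsM0 : 0 < sM := Real.sqrt_pos.mpr hMR
  have hab : (N : ℝ) * a * b ≤ sN * sM * C := by
    have h1 : ((N : ℝ) * a * b) ^ 2 ≤ (sN * sM * C) ^ 2 := by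
      have h1' := mul_le_mul_of_nonneg_left key hNR.le
      have h2' : (sN * sM * C) ^ 2 = (N : ℝ) * ((M : ℝ) * C ^ 2) := by
        rw [mul_pow, mul_pow, hsN, hsM]; ring
      rw [h2']
      calc ((N : ℝ) * a * b) ^ 2 = (N : ℝ) * ((N : ℝ) * (a ^ 2 * b ^ 2)) := by ring
        _ ≤ (N : ℝ) * ((M : ℝ) * C ^ 2) := h1'
    have h2 := Real.sqrt_le_sqrt h1
    rwa [Real.sqrt_sq (by positivity), Real.sqrt_sq (by positivity)] at h2
  have hbound : (N : ℝ) * a * b / M ≤ sN * sM⁻¹ * C := by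
    rw [← hsM, div_le_iff₀ (by positivity)]
    calc (N : ℝ) * a * b ≤ sN * sM * C := hab
      _ = sN * sM⁻¹ * C * sM ^ 2 := by field_simp
  -- value of d
  have hd0 : 0 < d := by
    rw [hd]
    exact mul_pos (Real.rpow_pos_of_pos ha _) (Real.rpow_pos_of_pos hb _)
  have hd2 : d ^ 2 = a⁻¹ * b := by
    rw [hd, mul_pow,
      ← Real.rpow_natCast (a ^ (-(1/2) : ℝ)) 2, ← Real.rpow_mul ha.le,
      ← Real.rpow_natCast (b ^ ((1/2) : ℝ)) 2, ← Real.rpow_mul hb.le]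
    norm_num [Real.rpow_neg_one]
  have hAxv : Ax = N * a ^ 2 / M := by
    rw [eq_div_iff hMR.ne']; exact hAxM
  have hAfv : Af = N * b ^ 2 / M := by
    rw [eq_div_iff hMR.ne']; exact hAfM
  have hdnorm : ‖(d : ℂ)‖ = d := by
    rw [Complex.norm_real, Real.norm_eq_abs, abs_of_nonneg hd0.le]
  constructor
  · intro v
    have hsum : ∑ j, ‖⟪v, (d : ℂ) • x j⟫‖ ^ 2 = d ^ 2 * (Ax * ‖v‖ ^ 2) := by
      rw [← hAx v, Finset.mul_sum]
      refine Finset.sum_congr rfl fun j _ => ?_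
      rw [inner_smul_right, norm_mul, mul_pow, hdnorm]
    rw [hsum]
    have h2 : d ^ 2 * Ax = N * a * b / M := by
      rw [hd2, hAxv]; field_simp
    calc d ^ 2 * (Ax * ‖v‖ ^ 2) = (d ^ 2 * Ax) * ‖v‖ ^ 2 := by ring
      _ ≤ sN * sM⁻¹ * C * ‖v‖ ^ 2 := by
          apply mul_le_mul_of_nonneg_right _ (sq_nonneg _)
          rw [h2]; exact hbound
  · intro v
    have hsum : ∑ j, ‖⟪v, ((d : ℂ))⁻¹ • f j⟫‖ ^ 2 = (d⁻¹) ^ 2 * (Af * ‖v‖ ^ 2) := by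
      rw [← hAf v, Finset.mul_sum]
      refine Finset.sum_congr rfl fun j _ => ?_
      rw [inner_smul_right, norm_mul, mul_pow, norm_inv, hdnorm, inv_pow]
    rw [hsum]
    have h2 : (d⁻¹) ^ 2 * Af = N * a * b / M := by
      rw [inv_pow, hd2, hAfv]; field_simp
    calc (d⁻¹) ^ 2 * (Af * ‖v‖ ^ 2) = ((d⁻¹) ^ 2 * Af) * ‖v‖ ^ 2 := by ring
      _ ≤ sN * sM⁻¹ * C * ‖v‖ ^ 2 := by
          apply mul_le_mul_of_nonneg_right _ (sq_nonneg _)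
          rw [h2]; exact hbound
end

section
/- Let (x_j)_{j=1}^N be a finite frame for ℂ^M with lower frame bound A and upper frame bound B, and let U_X be its N×M analysis matrix, whose j-th row is x_j (so entry (j,k) is the k-th coordinate of x_j in an orthonormal basis). Let c_1,...,c_M ∈ ℂ^N be the columns of U_X. Then (c_k)_{k=1}^M spans the column space of U_X, and it is a frame for the column space with lower frame bound A and upper frame bound B: for every y in the column space, A‖y‖² ≤ Σ_{k=1}^M |⟨y, c_k⟩|² ≤ B‖y‖² (and the upper inequality holds for all y ∈ ℂ^N). -/
/-!
Let `T v = U v`. Up to conjugating `v`, the frame inequalities for the rows say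
`A‖v‖² ≤ ‖T v‖² ≤ B‖v‖²`; the column sums are `‖T* y‖²`, and the columns span `range T`.
Both bounds then come from Cauchy–Schwarz in `‖S w‖² = ⟪w, S* S w⟫ ≤ ‖w‖ ‖S* S w‖`: with `S = T`
and `y = T w` it gives `A‖y‖⁴ ≤ A‖w‖²‖T* y‖² ≤ ‖y‖²‖T* y‖²`, with `S = T*` it gives
`‖T* y‖⁴ ≤ ‖y‖²‖T T* y‖² ≤ B‖y‖²‖T* y‖²`.
-/

open scoped ComplexInnerProductSpace InnerProductSpace
open WithLp (toLp ofLp)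

namespace LinearMap

variable {𝕜 E F : Type*} [RCLike 𝕜] [NormedAddCommGroup E] [InnerProductSpace 𝕜 E]
  [NormedAddCommGroup F] [InnerProductSpace 𝕜 F] [FiniteDimensional 𝕜 E]
  [FiniteDimensional 𝕜 F]

theorem norm_apply_sq_le_norm_mul_norm_adjoint_apply (T : E →ₗ[𝕜] F) (w : E) :
    ‖T w‖ ^ 2 ≤ ‖w‖ * ‖T.adjoint (T w)‖ :=
  calc ‖T w‖ ^ 2 = ‖⟪w, T.adjoint (T w)⟫_𝕜‖ := by
        rw [adjoint_inner_right, inner_self_eq_norm_sq_to_K, norm_pow, RCLike.norm_ofReal,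
          abs_norm]
    _ ≤ ‖w‖ * ‖T.adjoint (T w)‖ := norm_inner_le_norm _ _

theorem mul_norm_sq_le_norm_adjoint_apply_sq (T : E →ₗ[𝕜] F) {A : ℝ} (hA : 0 ≤ A)
    (h : ∀ w, A * ‖w‖ ^ 2 ≤ ‖T w‖ ^ 2) {y : F} (hy : y ∈ range T) :
    A * ‖y‖ ^ 2 ≤ ‖T.adjoint y‖ ^ 2 := by
  obtain ⟨w, rfl⟩ := hy
  rcases (norm_nonneg (T w)).eq_or_lt with h0 | hpos
  · rw [← h0, zero_pow two_ne_zero, mul_zero]; positivity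
  refine le_of_mul_le_mul_left ?_ (pow_pos hpos 2)
  calc ‖T w‖ ^ 2 * (A * ‖T w‖ ^ 2) = A * (‖T w‖ ^ 2) ^ 2 := by ring
    _ ≤ A * (‖w‖ * ‖T.adjoint (T w)‖) ^ 2 := by
      gcongr; exact T.norm_apply_sq_le_norm_mul_norm_adjoint_apply w
    _ = A * ‖w‖ ^ 2 * ‖T.adjoint (T w)‖ ^ 2 := by ring
    _ ≤ ‖T w‖ ^ 2 * ‖T.adjoint (T w)‖ ^ 2 := by gcongr; exact h w

theorem norm_adjoint_apply_sq_le (T : E →ₗ[𝕜] F) {B : ℝ} (hB : 0 ≤ B)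
    (h : ∀ w, ‖T w‖ ^ 2 ≤ B * ‖w‖ ^ 2) (y : F) :
    ‖T.adjoint y‖ ^ 2 ≤ B * ‖y‖ ^ 2 := by
  rcases (norm_nonneg (T.adjoint y)).eq_or_lt with h0 | hpos
  · rw [← h0, zero_pow two_ne_zero]; positivity
  refine le_of_mul_le_mul_left ?_ (pow_pos hpos 2)
  calc ‖T.adjoint y‖ ^ 2 * ‖T.adjoint y‖ ^ 2 = (‖T.adjoint y‖ ^ 2) ^ 2 := by ring
    _ ≤ (‖y‖ * ‖T (T.adjoint y)‖) ^ 2 := by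
      gcongr
      simpa only [adjoint_adjoint] using
        T.adjoint.norm_apply_sq_le_norm_mul_norm_adjoint_apply y
    _ = ‖y‖ ^ 2 * ‖T (T.adjoint y)‖ ^ 2 := by ring
    _ ≤ ‖y‖ ^ 2 * (B * ‖T.adjoint y‖ ^ 2) := by gcongr; exact h _
    _ = ‖T.adjoint y‖ ^ 2 * (B * ‖y‖ ^ 2) := by ring

end LinearMap

theorem EuclideanSpace.norm_toLp_star {𝕜 ι : Type*} [RCLike 𝕜] [Fintype ι] (v : ι → 𝕜) :
    ‖toLp 2 (star v)‖ = ‖toLp 2 v‖ := by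
  simp [EuclideanSpace.norm_eq]

namespace Matrix

variable {𝕜 m n : Type*} [RCLike 𝕜] [Fintype n] [DecidableEq n]

theorem range_toEuclideanLin (U : Matrix m n 𝕜) :
    LinearMap.range U.toEuclideanLin = Submodule.span 𝕜 (Set.range fun k => toLp 2 (U.col k)) := by
  ext y
  rw [Submodule.mem_span_range_iff_exists_fun, LinearMap.mem_range]
  refine (Equiv.exists_congr_left (WithLp.equiv 2 (n → 𝕜))).trans ?_
  simp [toLpLin_apply, mulVec_eq_sum, col, ← WithLp.toLp_smul, ← WithLp.toLp_sum]

theorem sum_norm_inner_star_toLp_row_sq [Fintype m] (U : Matrix m n 𝕜) (w : n → 𝕜) :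
    ∑ j, ‖⟪toLp 2 (star w), toLp 2 (U j)⟫_𝕜‖ ^ 2 = ‖U.toEuclideanLin (toLp 2 w)‖ ^ 2 := by
  simp [EuclideanSpace.norm_sq_eq, EuclideanSpace.inner_toLp_toLp, mulVec, dotProduct_comm]

theorem sum_norm_inner_toLp_col_sq [Fintype m] [DecidableEq m] (U : Matrix m n 𝕜)
    (y : EuclideanSpace 𝕜 m) :
    ∑ k, ‖⟪y, toLp 2 (U.col k)⟫_𝕜‖ ^ 2 = ‖U.toEuclideanLin.adjoint y‖ ^ 2 := by
  rw [← toEuclideanLin_conjTranspose_eq_adjoint, EuclideanSpace.norm_sq_eq]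
  refine Finset.sum_congr rfl fun k _ => ?_
  rw [← norm_inner_symm]
  simp [EuclideanSpace.inner_eq_star_dotProduct, toLpLin_apply, mulVec, dotProduct_comm, col,
    Pi.star_def, conjTranspose]

end Matrix

/-- Let `(xⱼ)` be a finite frame for `ℂ^M` with frame bounds `A ≤ B`, and let `U` be its
`N × M` analysis matrix whose `j`-th row is `xⱼ` (entry `(j,k)` is the `k`-th coordinate
of `xⱼ`), with columns `c₁, ..., c_M ∈ ℂ^N`.  Then the columns span the column space of
`U` (the range of `v ↦ U v`), they form a frame for the column space with lower bound `A`,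
and they satisfy the upper frame inequality with bound `B` on all of `ℂ^N`. -/
theorem columns_of_analysis_matrix
    (M N : ℕ) (x : Fin N → EuclideanSpace ℂ (Fin M))
    (A B : ℝ) (hA : 0 < A) (hAB : A ≤ B)
    (hframe : ∀ v : EuclideanSpace ℂ (Fin M),
      A * ‖v‖ ^ 2 ≤ ∑ j, ‖⟪v, x j⟫‖ ^ 2 ∧ ∑ j, ‖⟪v, x j⟫‖ ^ 2 ≤ B * ‖v‖ ^ 2)
    (U : Matrix (Fin N) (Fin M) ℂ) (hU : ∀ j k, U j k = x j k)
    (c : Fin M → EuclideanSpace ℂ (Fin N)) (hc : ∀ k j, c k j = x j k) :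
    ((Submodule.span ℂ (Set.range c) : Set (EuclideanSpace ℂ (Fin N))) =
      {y : EuclideanSpace ℂ (Fin N) | ∃ v : Fin M → ℂ, ∀ j, y j = ∑ k, U j k * v k}) ∧
    (∀ y ∈ Submodule.span ℂ (Set.range c),
      A * ‖y‖ ^ 2 ≤ ∑ k, ‖⟪y, c k⟫‖ ^ 2) ∧
    (∀ y : EuclideanSpace ℂ (Fin N), ∑ k, ‖⟪y, c k⟫‖ ^ 2 ≤ B * ‖y‖ ^ 2) := by
  obtain rfl : x = fun j => toLp 2 (U j) := funext fun j => PiLp.ext fun k => (hU j k).symm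
  obtain rfl : c = fun k => toLp 2 (U.col k) := funext fun k => PiLp.ext fun j => hc k j
  set T := U.toEuclideanLin
  have hT : ∀ w, A * ‖w‖ ^ 2 ≤ ‖T w‖ ^ 2 ∧ ‖T w‖ ^ 2 ≤ B * ‖w‖ ^ 2 := fun w => by
    simpa [EuclideanSpace.norm_toLp_star, U.sum_norm_inner_star_toLp_row_sq] using
      hframe (toLp 2 (star (ofLp w)))
  simp only [← U.range_toEuclideanLin, U.sum_norm_inner_toLp_col_sq]
  refine ⟨?_, fun y => T.mul_norm_sq_le_norm_adjoint_apply_sq hA.le (fun w => (hT w).1),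
    T.norm_adjoint_apply_sq_le (hA.le.trans hAB) fun w => (hT w).2⟩
  ext y
  refine (Equiv.exists_congr_left (WithLp.equiv 2 (Fin M → ℂ))).trans ?_
  simp [Matrix.toLpLin_apply, PiLp.ext_iff, Matrix.mulVec, dotProduct, eq_comm]
end

section
/- Let H be a separable complex Hilbert space, (m_j)_{j=1}^∞ a sequence of scalars, and (x_j)_{j=1}^∞, (f_j)_{j=1}^∞ sequences in H such that the series Σ_{j=1}^∞ ε_j m_j ⟨x, f_j⟩ x_j converges for every x ∈ H and every sequence of scalars (ε_j)_{j=1}^∞ with |ε_j| = 1. Then there exists a constant C > 0 such that for all m ≤ n in ℕ, all x ∈ H, and all scalars ε_m,...,ε_n with |ε_j| = 1, one has ‖Σ_{j=m}^n ε_j m_j ⟨x, f_j⟩ x_j‖ ≤ C‖x‖. -/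
/-!
Fix `v` and put `bⱼ = mⱼ ⟪v, fⱼ⟫ xⱼ`. An indicator sequence is the average of two sign
sequences, so every subseries of `∑ bⱼ` converges, and a gliding-hump argument shows that `b` is
summable; hence the finite subsums of `b` are bounded. These subsums depend conjugate-linearly
and continuously on `v`, so Banach–Steinhaus bounds them by `C ‖v‖` uniformly. Splitting
`⟪w, bⱼ⟫`, for a norming functional `w`, into positive and negative real and imaginary parts
passes from subsums to coefficients of modulus at most one, at the cost of a factor `4`.
-/

open scoped ComplexInnerProductSpace
open Filter Finset

theorem Finset.sum_abs_le_two_mul_of_forall_subset {ι : Type*} (F : Finset ι) (a : ι → ℝ)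
    {M : ℝ} (h : ∀ G ⊆ F, |∑ j ∈ G, a j| ≤ M) : ∑ j ∈ F, |a j| ≤ 2 * M := by
  classical
  rw [← sum_filter_add_sum_filter_not F (fun j => 0 ≤ a j), two_mul]
  have hpos : ∑ j ∈ F.filter (fun j => 0 ≤ a j), |a j|
      = ∑ j ∈ F.filter (fun j => 0 ≤ a j), a j :=
    sum_congr rfl fun j hj => abs_of_nonneg (mem_filter.1 hj).2
  have hneg : ∑ j ∈ F.filter (fun j => ¬0 ≤ a j), |a j|
      = -∑ j ∈ F.filter (fun j => ¬0 ≤ a j), a j := by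
    rw [← sum_neg_distrib]
    exact sum_congr rfl fun j hj => abs_of_neg (not_le.1 (mem_filter.1 hj).2)
  rw [hpos, hneg]
  exact add_le_add ((le_abs_self _).trans (h _ (filter_subset _ _)))
    ((neg_le_abs _).trans (h _ (filter_subset _ _)))

theorem norm_sum_smul_le_four_mul {ι E : Type*} [NormedAddCommGroup E] [NormedSpace ℂ E]
    (F : Finset ι) (b : ι → E) {M : ℝ} (h : ∀ G ⊆ F, ‖∑ j ∈ G, b j‖ ≤ M)
    (ε : ι → ℂ) (hε : ∀ j ∈ F, ‖ε j‖ ≤ 1) : ‖∑ j ∈ F, ε j • b j‖ ≤ 4 * M := by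
  obtain ⟨g, hg, hgy⟩ := exists_dual_vector'' ℂ (∑ j ∈ F, ε j • b j)
  have hgG : ∀ G ⊆ F, ‖g (∑ j ∈ G, b j)‖ ≤ M := fun G hG =>
    (g.le_of_opNorm_le hg _).trans (by simpa using h G hG)
  have hre : ∑ j ∈ F, |(g (b j)).re| ≤ 2 * M :=
    F.sum_abs_le_two_mul_of_forall_subset _ fun G hG => by
      simpa [map_sum, Complex.re_sum] using (Complex.abs_re_le_norm _).trans (hgG G hG)
  have him : ∑ j ∈ F, |(g (b j)).im| ≤ 2 * M :=
    F.sum_abs_le_two_mul_of_forall_subset _ fun G hG => by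
      simpa [map_sum, Complex.im_sum] using (Complex.abs_im_le_norm _).trans (hgG G hG)
  calc ‖∑ j ∈ F, ε j • b j‖ = (g (∑ j ∈ F, ε j • b j)).re := by simp [hgy]
    _ = ∑ j ∈ F, (ε j * g (b j)).re := by simp [map_sum, Complex.re_sum]
    _ ≤ ∑ j ∈ F, ‖g (b j)‖ := sum_le_sum fun j hj =>
          (Complex.re_le_norm _).trans <| by
            rw [norm_mul]; exact mul_le_of_le_one_left (norm_nonneg _) (hε j hj)
    _ ≤ ∑ j ∈ F, (|(g (b j)).re| + |(g (b j)).im|) :=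
          sum_le_sum fun j _ => Complex.norm_le_abs_re_add_abs_im _
    _ ≤ 2 * M + 2 * M := by rw [sum_add_distrib]; exact add_le_add hre him
    _ = 4 * M := by ring

theorem cauchySeq_sum_indicator_of_forall_norm_eq_one {𝕜 E : Type*} [RCLike 𝕜]
    [NormedAddCommGroup E] [NormedSpace 𝕜 E] {b : ℕ → E}
    (h : ∀ ε : ℕ → 𝕜, (∀ j, ‖ε j‖ = 1) →
      ∃ y, Tendsto (fun n => ∑ j ∈ range n, ε j • b j) atTop (nhds y))
    (P : Set ℕ) : CauchySeq fun n => ∑ j ∈ range n, P.indicator b j := by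
  classical
  obtain ⟨y, hy⟩ := h 1 fun _ => norm_one
  obtain ⟨z, hz⟩ := h (fun j => if j ∈ P then 1 else -1) fun j => by split_ifs <;> simp
  refine (((hy.add hz).const_smul (2⁻¹ : 𝕜)).congr fun n => ?_).cauchySeq
  rw [← sum_add_distrib, smul_sum]
  refine sum_congr rfl fun j _ => ?_
  by_cases hj : j ∈ P
  · simp only [Set.indicator_of_mem hj, Pi.one_apply, if_pos hj]; module
  · simp [hj]

theorem summable_of_forall_cauchySeq_sum_indicator {E : Type*} [NormedAddCommGroup E]
    [CompleteSpace E] {b : ℕ → E}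
    (h : ∀ P : Set ℕ, CauchySeq fun n => ∑ j ∈ range n, P.indicator b j) : Summable b := by
  rw [summable_iff_vanishing_norm]
  by_contra! hbad
  obtain ⟨δ, hδ, hbad⟩ := hbad
  choose t hdisj hbig using hbad
  -- Gliding hump: glue the bad blocks `t (range N)`, which lie beyond `N`, into one subseries
  -- whose partial sums are not Cauchy.
  set next : ℕ → ℕ := fun N => N + (t (range N)).sup id + 1
  have ht : ∀ N, t (range N) ⊆ Ico N (next N) := fun N j hj => by
    have hNj : N ≤ j := not_lt.1 fun hj' => disjoint_left.1 (hdisj _) hj (mem_range.2 hj')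
    have := le_sup (f := id) hj
    exact mem_Ico.2 ⟨hNj, by simp only [next, id] at this ⊢; omega⟩
  set B : ℕ → ℕ := fun k => next^[k] 0
  have hBsucc : ∀ k, B (k + 1) = next (B k) := fun k => Function.iterate_succ_apply' _ _ _
  have hB : StrictMono B := strictMono_nat_of_lt_succ fun k => by
    rw [hBsucc]; simp only [next]; omega
  set P : Set ℕ := ⋃ k, (t (range (B k)) : Set ℕ)
  have hP : ∀ k, ∀ j ∈ Ico (B k) (B (k + 1)), j ∈ P ↔ j ∈ t (range (B k)) := by
    intro k j hj
    refine ⟨fun hjP => ?_, fun hjt => Set.mem_iUnion.2 ⟨k, hjt⟩⟩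
    obtain ⟨l, hl⟩ := Set.mem_iUnion.1 hjP
    have hjl := mem_Ico.1 (hBsucc l ▸ ht _ hl)
    have hjk := mem_Ico.1 hj
    obtain rfl : l = k := by
      by_contra hlk
      rcases Nat.lt_or_gt_of_ne hlk with hlk | hlk <;>
        linarith [hB.monotone (Nat.succ_le_of_lt hlk)]
    exact hl
  have hblock : ∀ k, ∑ j ∈ range (B (k + 1)), P.indicator b j
      - ∑ j ∈ range (B k), P.indicator b j = ∑ j ∈ t (range (B k)), b j := by
    intro k
    rw [← sum_Ico_eq_sub _ (hB.monotone k.le_succ),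
      ← sum_indicator_subset b (hBsucc k ▸ ht (B k))]
    exact sum_congr rfl fun j hj => by
      simp only [Set.indicator, hP k j hj, mem_coe]
  obtain ⟨N, hN⟩ := Metric.cauchySeq_iff.1 (h P) δ hδ
  have hclose := hN (B (N + 1)) ((N.le_succ).trans (hB.id_le _)) (B N) (hB.id_le N)
  rw [dist_eq_norm, hblock] at hclose
  exact (hbig _).not_gt hclose

theorem Summable.exists_forall_norm_sum_le {ι E : Type*} [NormedAddCommGroup E]
    [CompleteSpace E] {b : ι → E} (hb : Summable b) :
    ∃ M, ∀ F : Finset ι, ‖∑ j ∈ F, b j‖ ≤ M := by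
  classical
  obtain ⟨s, hs⟩ := summable_iff_vanishing_norm.1 hb 1 one_pos
  refine ⟨∑ j ∈ s, ‖b j‖ + 1, fun F => ?_⟩
  rw [← sum_inter_add_sum_sdiff F s]
  refine (norm_add_le _ _).trans (add_le_add ?_ (hs _ sdiff_disjoint).le)
  exact (norm_sum_le _ _).trans
    (sum_le_sum_of_subset_of_nonneg inter_subset_right fun _ _ _ => norm_nonneg _)

noncomputable def partialFrameMultiplier {H : Type*} [NormedAddCommGroup H]
    [InnerProductSpace ℂ H] (m : ℕ → ℂ) (x f : ℕ → H) (F : Finset ℕ) : H →L⋆[ℂ] H :=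
  ∑ j ∈ F, m j • (ContinuousLinearMap.toSpanSingleton ℂ (x j)).comp (innerSLFlip ℂ (f j))

theorem partialFrameMultiplier_apply {H : Type*} [NormedAddCommGroup H]
    [InnerProductSpace ℂ H] (m : ℕ → ℂ) (x f : ℕ → H) (F : Finset ℕ) (v : H) :
    partialFrameMultiplier m x f F v = ∑ j ∈ F, (m j * ⟪v, f j⟫) • x j := by
  simp [partialFrameMultiplier, smul_smul]

theorem uniform_bound_of_unconditional_convergence_general
    {H : Type*} [NormedAddCommGroup H] [InnerProductSpace ℂ H]
    [CompleteSpace H]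
    (m : ℕ → ℂ) (x f : ℕ → H)
    (hconv : ∀ (v : H) (ε : ℕ → ℂ), (∀ j, ‖ε j‖ = 1) →
      ∃ y : H, Filter.Tendsto
        (fun n => ∑ j ∈ Finset.range n, (ε j * m j * ⟪v, f j⟫) • x j)
        Filter.atTop (nhds y)) :
    ∃ C : ℝ, 0 < C ∧ ∀ (k n : ℕ), k ≤ n → ∀ (v : H) (ε : ℕ → ℂ),
      (∀ j ∈ Finset.Icc k n, ‖ε j‖ = 1) →
      ‖∑ j ∈ Finset.Icc k n, (ε j * m j * ⟪v, f j⟫) • x j‖ ≤ C * ‖v‖ := by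
  have hpointwise : ∀ v, ∃ M, ∀ F, ‖partialFrameMultiplier m x f F v‖ ≤ M := by
    intro v
    have hsigns : ∀ ε : ℕ → ℂ, (∀ j, ‖ε j‖ = 1) → ∃ y, Tendsto
        (fun n => ∑ j ∈ range n, ε j • (m j * ⟪v, f j⟫) • x j) atTop (nhds y) := by
      simpa only [smul_smul, mul_assoc] using hconv v
    have hsummable := summable_of_forall_cauchySeq_sum_indicator
      (cauchySeq_sum_indicator_of_forall_norm_eq_one hsigns)
    simpa only [partialFrameMultiplier_apply] using hsummable.exists_forall_norm_sum_le
  obtain ⟨C, hC⟩ := banach_steinhaus hpointwise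
  refine ⟨max (4 * C) 1, by positivity, fun k n _ v ε hε => ?_⟩
  have hsubsums : ∀ G ⊆ Icc k n, ‖∑ j ∈ G, (m j * ⟪v, f j⟫) • x j‖ ≤ C * ‖v‖ := fun G _ => by
    rw [← partialFrameMultiplier_apply]
    exact (partialFrameMultiplier m x f G).le_of_opNorm_le (hC G) v
  calc ‖∑ j ∈ Icc k n, (ε j * m j * ⟪v, f j⟫) • x j‖
        = ‖∑ j ∈ Icc k n, ε j • (m j * ⟪v, f j⟫) • x j‖ := by simp only [smul_smul, mul_assoc]
    _ ≤ 4 * (C * ‖v‖) := norm_sum_smul_le_four_mul _ _ hsubsums ε fun j hj => (hε j hj).le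
    _ ≤ max (4 * C) 1 * ‖v‖ := by
        rw [← mul_assoc]; gcongr; exact le_max_left _ _

/-- If the frame multiplier series `∑ εⱼ mⱼ ⟨x, fⱼ⟩ xⱼ` converges for every `x` in a
separable complex Hilbert space and every unimodular sequence `(εⱼ)`, then there is a
uniform constant `C > 0` bounding the norms of all partial-block sums
`∑_{j=m}^n εⱼ mⱼ ⟨x, fⱼ⟩ xⱼ` by `C‖x‖`. -/
theorem uniform_bound_of_unconditional_convergence
    {H : Type*} [NormedAddCommGroup H] [InnerProductSpace ℂ H]
    [CompleteSpace H] [TopologicalSpace.SeparableSpace H]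
    (m : ℕ → ℂ) (x f : ℕ → H)
    (hconv : ∀ (v : H) (ε : ℕ → ℂ), (∀ j, ‖ε j‖ = 1) →
      ∃ y : H, Filter.Tendsto
        (fun n => ∑ j ∈ Finset.range n, (ε j * m j * ⟪v, f j⟫) • x j)
        Filter.atTop (nhds y)) :
    ∃ C : ℝ, 0 < C ∧ ∀ (k n : ℕ), k ≤ n → ∀ (v : H) (ε : ℕ → ℂ),
      (∀ j ∈ Finset.Icc k n, ‖ε j‖ = 1) →
      ‖∑ j ∈ Finset.Icc k n, (ε j * m j * ⟪v, f j⟫) • x j‖ ≤ C * ‖v‖ :=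
  uniform_bound_of_unconditional_convergence_general m x f hconv
end

section
/- Let K₁ > 0 be a constant satisfying Khintchine's inequality: for every n ∈ ℕ and all scalars a_1,...,a_n, 2^{-n} Σ_{δ ∈ {±1}^n} |Σ_{j=1}^n δ_j a_j| ≥ K₁ (Σ_{j=1}^n |a_j|²)^{1/2}. Let C, β > 0, N, M ∈ ℕ, and let (x_j)_{j=1}^N and (f_j)_{j=1}^N be frames for an M-dimensional complex Hilbert space, each with condition number at most β (i.e., each admits frame bounds A ≤ B with B/A ≤ β), with ‖x_j‖ = ‖f_j‖ for all 1 ≤ j ≤ N, and such that ‖Σ_{j=1}^N ε_j ⟨x, f_j⟩ x_j‖ ≤ C‖x‖ for all x in the space and all scalars ε_j with |ε_j| = 1. Then both (x_j)_{j=1}^N and (f_j)_{j=1}^N are Bessel with Bessel bound (27/4) K₁^{-4} β² C. -/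
open scoped ComplexInnerProductSpace

section Aux

variable {H : Type*} [NormedAddCommGroup H] [InnerProductSpace ℂ H]

private lemma aux_parseval [FiniteDimensional ℂ H] {M : ℕ}
    (e : OrthonormalBasis (Fin M) ℂ H) (v : H) :
    ∑ i, ‖⟪e i, v⟫‖ ^ 2 = ‖v‖ ^ 2 := by
  have h : ‖e.repr v‖ = ‖v‖ := e.repr.norm_map v
  rw [EuclideanSpace.norm_eq] at h
  have h2 : (0:ℝ) ≤ ∑ i, ‖e.repr v i‖ ^ 2 :=
    Finset.sum_nonneg fun i _ => sq_nonneg _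
  simp_rw [← e.repr_apply_apply v]
  rw [← h, Real.sq_sqrt h2]

private lemma aux_K_le_one (K₁ : ℝ)
    (hK : ∀ (n : ℕ) (a : Fin n → ℂ),
      K₁ * Real.sqrt (∑ j, ‖a j‖ ^ 2) ≤
        ((2 : ℝ) ^ n)⁻¹ * ∑ δ : Fin n → Bool, ‖∑ j, (if δ j then (1 : ℂ) else -1) * a j‖) :
    K₁ ≤ 1 := by
  have h := hK 1 (fun _ => 1)
  have e1 : ∀ δ : Fin 1 → Bool, ‖∑ j, (if δ j then (1:ℂ) else -1) * 1‖ = 1 := by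
    intro δ
    rw [Fin.sum_univ_one]
    cases hd : δ 0 <;> simp
  rw [Finset.sum_congr rfl (fun δ _ => e1 δ)] at h
  simp at h
  linarith

private lemma aux_unc {C : ℝ} {N : ℕ} (x f : Fin N → H)
    (hunc : ∀ (v : H) (ε : Fin N → ℂ), (∀ j, ‖ε j‖ = 1) →
      ‖∑ j, (ε j * ⟪v, f j⟫) • x j‖ ≤ C * ‖v‖)
    (v w : H) :
    ∑ j, ‖⟪v, f j⟫‖ * ‖⟪w, x j⟫‖ ≤ C * ‖v‖ * ‖w‖ := by
  set t : Fin N → ℂ := fun j => ⟪v, f j⟫ * ⟪w, x j⟫ with ht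
  set ε : Fin N → ℂ := fun j => if t j = 0 then 1 else (‖t j‖ : ℂ) / t j with hε
  have hε1 : ∀ j, ‖ε j‖ = 1 := by
    intro j
    simp only [hε]
    split_ifs with h
    · simp
    · rw [norm_div]
      simp only [Complex.norm_real, Real.norm_eq_abs, abs_norm]
      exact div_self (norm_ne_zero_iff.mpr h)
  have hεt : ∀ j, ε j * t j = (‖t j‖ : ℂ) := by
    intro j
    simp only [hε]
    split_ifs with h
    · simp [h]
    · field_simp
  have key : (∑ j, ε j * t j) = ((∑ j, ‖t j‖ : ℝ) : ℂ) := by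
    push_cast
    exact Finset.sum_congr rfl fun j _ => hεt j
  have h2 : ∑ j, ‖⟪v, f j⟫‖ * ‖⟪w, x j⟫‖ = ‖∑ j, ε j * t j‖ := by
    rw [key, Complex.norm_real,
      Real.norm_of_nonneg (Finset.sum_nonneg fun j _ => norm_nonneg _)]
    exact Finset.sum_congr rfl fun j _ => (norm_mul _ _).symm
  have h4 : (∑ j, ε j * t j) = ⟪w, ∑ j, (ε j * ⟪v, f j⟫) • x j⟫ := by
    rw [inner_sum]
    refine Finset.sum_congr rfl fun j _ => ?_
    rw [inner_smul_right]; ring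
  rw [h2, h4]
  calc ‖⟪w, ∑ j, (ε j * ⟪v, f j⟫) • x j⟫‖ ≤ ‖w‖ * ‖∑ j, (ε j * ⟪v, f j⟫) • x j‖ :=
        norm_inner_le_norm _ _
    _ ≤ ‖w‖ * (C * ‖v‖) := mul_le_mul_of_nonneg_left (hunc v ε hε1) (norm_nonneg _)
    _ = C * ‖v‖ * ‖w‖ := by ring

/-- trace lower bound: `M * A ≤ ∑ ‖x j‖²` for a frame with lower bound `A`. -/
private lemma aux_trace [FiniteDimensional ℂ H] {M N : ℕ} {A : ℝ}
    (e : OrthonormalBasis (Fin M) ℂ H) (x : Fin N → H)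
    (hA : ∀ v : H, A * ‖v‖ ^ 2 ≤ ∑ j, ‖⟪v, x j⟫‖ ^ 2) :
    (M : ℝ) * A ≤ ∑ j, ‖x j‖ ^ 2 := by
  have h1 : ∀ j, ‖x j‖ ^ 2 = ∑ i, ‖⟪e i, x j⟫‖ ^ 2 := fun j => (aux_parseval e (x j)).symm
  calc (M : ℝ) * A = ∑ _i : Fin M, A := by simp [mul_comm]
    _ ≤ ∑ i, ∑ j, ‖⟪e i, x j⟫‖ ^ 2 := by
        refine Finset.sum_le_sum fun i _ => ?_
        have := hA (e i)
        rwa [e.orthonormal.1 i, one_pow, mul_one] at this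
    _ = ∑ j, ∑ i, ‖⟪e i, x j⟫‖ ^ 2 := Finset.sum_comm
    _ = ∑ j, ‖x j‖ ^ 2 := by simp_rw [← h1]

end Aux

/-- Let `K₁ > 0` satisfy Khintchine's inequality, and let `(xⱼ)`, `(fⱼ)` be frames for an
`M`-dimensional complex Hilbert space, each with condition number at most `β` (i.e. each
admits frame bounds `A ≤ B` with `B/A ≤ β`), with `‖xⱼ‖ = ‖fⱼ‖` for all `j`, satisfying
the unconditional multiplier bound `C`.  Then both `(xⱼ)` and `(fⱼ)` are Bessel with
Bessel bound `(27/4) K₁⁻⁴ β² C`. -/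
theorem condition_number_bessel_bound
    {H : Type*} [NormedAddCommGroup H] [InnerProductSpace ℂ H] [FiniteDimensional ℂ H]
    (K₁ : ℝ) (hK₁ : 0 < K₁)
    (hK : ∀ (n : ℕ) (a : Fin n → ℂ),
      K₁ * Real.sqrt (∑ j, ‖a j‖ ^ 2) ≤
        ((2 : ℝ) ^ n)⁻¹ * ∑ δ : Fin n → Bool, ‖∑ j, (if δ j then (1 : ℂ) else -1) * a j‖)
    (C β : ℝ) (hC : 0 < C) (hβ : 0 < β)
    (N M : ℕ) (hdim : Module.finrank ℂ H = M)
    (x f : Fin N → H)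
    (hxframe : ∃ A B : ℝ, 0 < A ∧ A ≤ B ∧ B / A ≤ β ∧
      ∀ v : H, A * ‖v‖ ^ 2 ≤ ∑ j, ‖⟪v, x j⟫‖ ^ 2 ∧ ∑ j, ‖⟪v, x j⟫‖ ^ 2 ≤ B * ‖v‖ ^ 2)
    (hfframe : ∃ A B : ℝ, 0 < A ∧ A ≤ B ∧ B / A ≤ β ∧
      ∀ v : H, A * ‖v‖ ^ 2 ≤ ∑ j, ‖⟪v, f j⟫‖ ^ 2 ∧ ∑ j, ‖⟪v, f j⟫‖ ^ 2 ≤ B * ‖v‖ ^ 2)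
    (hnorm : ∀ j, ‖x j‖ = ‖f j‖)
    (hunc : ∀ (v : H) (ε : Fin N → ℂ), (∀ j, ‖ε j‖ = 1) →
      ‖∑ j, (ε j * ⟪v, f j⟫) • x j‖ ≤ C * ‖v‖) :
    (∀ v : H, ∑ j, ‖⟪v, x j⟫‖ ^ 2 ≤ 27 / 4 * (K₁ ^ 4)⁻¹ * β ^ 2 * C * ‖v‖ ^ 2) ∧
    (∀ v : H, ∑ j, ‖⟪v, f j⟫‖ ^ 2 ≤ 27 / 4 * (K₁ ^ 4)⁻¹ * β ^ 2 * C * ‖v‖ ^ 2) := by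
  -- trivial case: M = 0
  rcases Nat.eq_zero_or_pos M with hM0 | hMpos
  · subst hM0
    have : Subsingleton H := by
      rw [← Module.finrank_zero_iff (R := ℂ)]; exact hdim
    have hv0 : ∀ v : H, v = 0 := fun v => Subsingleton.elim v 0
    constructor <;> intro v <;>
    · rw [hv0 v]
      simp
  -- the orthonormal basis
  have e : OrthonormalBasis (Fin M) ℂ H :=
    (stdOrthonormalBasis ℂ H).reindex (finCongr hdim)
  -- sign vectors
  set vv : (Fin M → Bool) → H :=
    fun δ => ∑ i, (if δ i then (1:ℂ) else -1) • e i with hvv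
  have hvnorm : ∀ δ, ‖vv δ‖ ^ 2 = (M : ℝ) := by
    intro δ
    rw [← aux_parseval e (vv δ)]
    have : ∀ i, ⟪e i, vv δ⟫ = (if δ i then (1:ℂ) else -1) := by
      intro i
      simp only [hvv]
      rw [e.orthonormal.inner_right_fintype]
    simp_rw [this]
    have : ∀ i : Fin M, ‖(if δ i then (1:ℂ) else -1)‖ ^ 2 = 1 := by
      intro i; cases hd : δ i <;> simp
    simp_rw [this]
    simp
  -- Khintchine lower bound for averages
  have hkhin : ∀ u : H, K₁ * ‖u‖ ≤ ((2:ℝ) ^ M)⁻¹ * ∑ δ : Fin M → Bool, ‖⟪vv δ, u⟫‖ := by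
    intro u
    have h := hK M (fun i => ⟪e i, u⟫)
    have hp : Real.sqrt (∑ i, ‖⟪e i, u⟫‖ ^ 2) = ‖u‖ := by
      rw [aux_parseval e u, Real.sqrt_sq (norm_nonneg u)]
    rw [hp] at h
    have hinner : ∀ δ : Fin M → Bool,
        ⟪vv δ, u⟫ = ∑ i, (if δ i then (1:ℂ) else -1) * ⟪e i, u⟫ := by
      intro δ
      simp only [hvv]
      rw [sum_inner]
      refine Finset.sum_congr rfl fun i _ => ?_
      rw [inner_smul_left]
      cases hd : δ i <;> simp
    simp_rw [hinner]
    exact h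
  -- the central trace estimate
  have htrace : K₁ ^ 2 * ∑ j, ‖f j‖ * ‖x j‖ ≤ C * M := by
    have step1 : ∀ j, (K₁ * ‖f j‖) * (K₁ * ‖x j‖) ≤
        ((2:ℝ) ^ M)⁻¹ * ((2:ℝ) ^ M)⁻¹ *
          ∑ δ : Fin M → Bool, ∑ δ' : Fin M → Bool, ‖⟪vv δ, f j⟫‖ * ‖⟪vv δ', x j⟫‖ := by
      intro j
      have h1 := hkhin (f j)
      have h2 := hkhin (x j)
      have := mul_le_mul h1 h2 (by positivity) (by positivity)
      calc (K₁ * ‖f j‖) * (K₁ * ‖x j‖)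
          ≤ (((2:ℝ) ^ M)⁻¹ * ∑ δ : Fin M → Bool, ‖⟪vv δ, f j⟫‖) *
            (((2:ℝ) ^ M)⁻¹ * ∑ δ' : Fin M → Bool, ‖⟪vv δ', x j⟫‖) := this
        _ = ((2:ℝ) ^ M)⁻¹ * ((2:ℝ) ^ M)⁻¹ *
            ((∑ δ : Fin M → Bool, ‖⟪vv δ, f j⟫‖) * ∑ δ' : Fin M → Bool, ‖⟪vv δ', x j⟫‖) := by
            ring
        _ = _ := by rw [Finset.sum_mul_sum]
    have step2 : ∀ (δ δ' : Fin M → Bool),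
        ∑ j, ‖⟪vv δ, f j⟫‖ * ‖⟪vv δ', x j⟫‖ ≤ C * M := by
      intro δ δ'
      have := aux_unc x f hunc (vv δ) (vv δ')
      have hn : ‖vv δ‖ * ‖vv δ'‖ = (M : ℝ) := by
        have a1 := hvnorm δ
        have a2 := hvnorm δ'
        have b1 : ‖vv δ‖ = Real.sqrt M := by
          rw [← a1, Real.sqrt_sq (norm_nonneg _)]
        have b2 : ‖vv δ'‖ = Real.sqrt M := by
          rw [← a2, Real.sqrt_sq (norm_nonneg _)]
        rw [b1, b2, ← Real.sqrt_mul_self (by positivity : (0:ℝ) ≤ (M:ℝ))]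
        rw [Real.sqrt_mul_self (by positivity : (0:ℝ) ≤ (M:ℝ))]
        exact Real.mul_self_sqrt (by positivity)
      calc ∑ j, ‖⟪vv δ, f j⟫‖ * ‖⟪vv δ', x j⟫‖ ≤ C * ‖vv δ‖ * ‖vv δ'‖ := this
        _ = C * (M : ℝ) := by rw [mul_assoc, hn]
    have card2 : (Finset.univ : Finset (Fin M → Bool)).card = 2 ^ M := by
      simp [Fintype.card_fun]
    calc K₁ ^ 2 * ∑ j, ‖f j‖ * ‖x j‖ = ∑ j, (K₁ * ‖f j‖) * (K₁ * ‖x j‖) := by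
          rw [Finset.mul_sum]; refine Finset.sum_congr rfl fun j _ => by ring
      _ ≤ ∑ _j : Fin N, ((2:ℝ) ^ M)⁻¹ * ((2:ℝ) ^ M)⁻¹ *
            ∑ δ : Fin M → Bool, ∑ δ' : Fin M → Bool, ‖⟪vv _, f _⟫‖ * ‖⟪vv _, x _⟫‖ :=
          Finset.sum_le_sum fun j _ => step1 j
      _ = ((2:ℝ) ^ M)⁻¹ * ((2:ℝ) ^ M)⁻¹ *
            ∑ δ : Fin M → Bool, ∑ δ' : Fin M → Bool, ∑ j, ‖⟪vv δ, f j⟫‖ * ‖⟪vv δ', x j⟫‖ := by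
          rw [← Finset.mul_sum]
          congr 1
          rw [Finset.sum_comm]
          refine Finset.sum_congr rfl fun δ _ => Finset.sum_comm
      _ ≤ ((2:ℝ) ^ M)⁻¹ * ((2:ℝ) ^ M)⁻¹ *
            ∑ _δ : Fin M → Bool, ∑ _δ' : Fin M → Bool, C * (M:ℝ) := by
          refine mul_le_mul_of_nonneg_left ?_ (by positivity)
          exact Finset.sum_le_sum fun δ _ => Finset.sum_le_sum fun δ' _ => step2 δ δ'
      _ = C * M := by
          simp only [Finset.sum_const, card2, nsmul_eq_mul, Nat.cast_pow, Nat.cast_ofNat]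
          field_simp
  have hM : (0:ℝ) < M := by exact_mod_cast hMpos
  have hk1 : K₁ ≤ 1 := aux_K_le_one K₁ hK
  have hk2 : K₁ ^ 2 ≤ 1 := by
    calc K₁ ^ 2 ≤ 1 ^ 2 := pow_le_pow_left₀ hK₁.le hk1 2
      _ = 1 := one_pow 2
  have key : ∀ (y : Fin N → H),
      (∀ j, ‖f j‖ * ‖x j‖ = ‖y j‖ ^ 2) →
      (∃ A B : ℝ, 0 < A ∧ A ≤ B ∧ B / A ≤ β ∧
        ∀ v : H, A * ‖v‖ ^ 2 ≤ ∑ j, ‖⟪v, y j⟫‖ ^ 2 ∧ ∑ j, ‖⟪v, y j⟫‖ ^ 2 ≤ B * ‖v‖ ^ 2) →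
      ∀ v : H, ∑ j, ‖⟪v, y j⟫‖ ^ 2 ≤ 27 / 4 * (K₁ ^ 4)⁻¹ * β ^ 2 * C * ‖v‖ ^ 2 := by
    intro y hy hframe v
    obtain ⟨A, B, hA0, hAB, hBA, hfb⟩ := hframe
    have htr2 := htrace
    rw [Finset.sum_congr rfl (fun j _ => hy j)] at htr2
    have htl : (M : ℝ) * A ≤ ∑ j, ‖y j‖ ^ 2 := aux_trace e y (fun u => (hfb u).1)
    have hAC : A * K₁ ^ 2 ≤ C := by
      have h3 : A * K₁ ^ 2 * M ≤ C * M := by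
        calc A * K₁ ^ 2 * M = K₁ ^ 2 * ((M : ℝ) * A) := by ring
          _ ≤ K₁ ^ 2 * ∑ j, ‖y j‖ ^ 2 :=
              mul_le_mul_of_nonneg_left htl (sq_nonneg K₁)
          _ ≤ C * M := htr2
      exact le_of_mul_le_mul_right h3 hM
    have hB : B ≤ β * A := (div_le_iff₀ hA0).mp hBA
    have hβ1 : 1 ≤ β := le_trans ((one_le_div hA0).mpr hAB) hBA
    have hBfin : B ≤ 27 / 4 * (K₁ ^ 4)⁻¹ * β ^ 2 * C := by
      have hK4 : (0:ℝ) < K₁ ^ 4 := by positivity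
      have hform : 27 / 4 * (K₁ ^ 4)⁻¹ * β ^ 2 * C = (27 / 4 * β ^ 2 * C) / K₁ ^ 4 := by
        field_simp
      rw [hform, le_div_iff₀ hK4]
      calc B * K₁ ^ 4 ≤ (β * A) * K₁ ^ 4 :=
            mul_le_mul_of_nonneg_right hB (le_of_lt hK4)
        _ = (β * K₁ ^ 2) * (A * K₁ ^ 2) := by ring
        _ ≤ (β * K₁ ^ 2) * C :=
            mul_le_mul_of_nonneg_left hAC (by positivity)
        _ = (K₁ ^ 2) * (β * C) := by ring
        _ ≤ 1 * (β * C) :=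
            mul_le_mul_of_nonneg_right hk2 (by positivity)
        _ = β * C := by ring
        _ ≤ (β * β) * C :=
            mul_le_mul_of_nonneg_right (le_mul_of_one_le_left hβ.le hβ1) hC.le
        _ = β ^ 2 * C := by ring
        _ ≤ 27 / 4 * (β ^ 2 * C) := le_mul_of_one_le_left (by positivity) (by norm_num)
        _ = 27 / 4 * β ^ 2 * C := by ring
    calc ∑ j, ‖⟪v, y j⟫‖ ^ 2 ≤ B * ‖v‖ ^ 2 := (hfb v).2
      _ ≤ 27 / 4 * (K₁ ^ 4)⁻¹ * β ^ 2 * C * ‖v‖ ^ 2 :=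
          mul_le_mul_of_nonneg_right hBfin (sq_nonneg _)
  refine ⟨key x (fun j => by rw [← hnorm j, sq]) hxframe,
    key f (fun j => by rw [hnorm j, sq]) hfframe⟩
end
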